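/- arXiv:2404.12740 — 6 statements merged into one kernel-verified Lean document; each statement's English description precedes it below -/
import Mathlib

section
/- For every real p ≥ 0, every integer ℓ ≥ 1 and every vertex v ∈ V_n, the expected total p-connectivity weight of the ℓ-neighbourhood satisfies E[‖S_ℓ(v)‖_p] ≤ W_v^p + W_v·Γ_{p+1,n}·(Γ_{2,n}+1)^{ℓ−1}. In particular, for p = 0 one has E[|S_ℓ(v)|] ≤ 1 + W_v·Γ_{1,n}·(Γ_{2,n}+1)^{ℓ−1}, and for p = 1 one moreover has E[‖S_ℓ(v)‖] ≤ W_v·(Γ_{2,n}+1)^ℓ for every ℓ ∈ ℕ. -/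
open MeasureTheory ProbabilityTheory Real
open scoped ENNReal

noncomputable section
open Classical

/-- The set of vertices at graph distance at most `ℓ` from `v`, for the graph with
adjacency relation `A` on `Fin n`. -/
def nbhd {n : ℕ} (A : Fin n → Fin n → Prop) : ℕ → Fin n → Set (Fin n)
  | 0, v => {v}
  | ℓ + 1, v => nbhd A ℓ v ∪ {u | ∃ w ∈ nbhd A ℓ v, A w u}

/-- `f` is a path of length `ℓ` for the adjacency relation `A`: `ℓ+1` pairwise distinct
vertices, consecutive ones joined by an edge. -/
def IsPathOn {n : ℕ} (A : Fin n → Fin n → Prop) (ℓ : ℕ) (f : Fin (ℓ + 1) → Fin n) : Prop :=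
  Function.Injective f ∧ ∀ i : Fin ℓ, A (f i.castSucc) (f i.succ)

/-- total `p`-connectivity weight `‖U‖_p` of a vertex set `U`. -/
def wnorm {n : ℕ} (W : Fin n → ℝ) (p : ℝ) (U : Set (Fin n)) : ℝ :=
  ∑ u : Fin n, Set.indicator U (fun u => W u ^ p) u

/-- `Γ_{p,n}` -/
def Gam (n : ℕ) (θ : ℝ) (W : Fin n → ℝ) (p : ℝ) : ℝ :=
  (∑ u : Fin n, W u ^ p) / (n * θ)

/-!
A vertex `u` lies in `S_ℓ(v)` only if some path of length `k ≤ ℓ` joins `v` to `u`. The edges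
of a path are distinct pairs, so by independence the path is present with probability at most
`∏ W_a W_b / (nθ)` over its edges. The union bound over paths, enlarged to all walks, gives
`E ‖S_ℓ(v)‖_p ≤ ∑_{k ≤ ℓ} (Q^k W^p)(v)` for the rank-one matrix `Q = W Wᵀ / (nθ)`, whose powers
are explicit: `(Q^{k+1} W^p)(v) = W_v Γ_{p+1} Γ_2^k`. Finally `∑_{k ≤ m} Γ_2^k ≤ (Γ_2 + 1)^m`
by the binomial theorem.
-/

section nbhd
variable {n : ℕ} {A : Fin n → Fin n → Prop}

lemma nbhd_monotone (v : Fin n) : Monotone fun ℓ => nbhd A ℓ v :=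
  monotone_nat_of_le_succ fun _ => Set.subset_union_left

lemma mem_nbhd_of_chain {k : ℕ} {f : Fin (k + 1) → Fin n}
    (hf : ∀ i : Fin k, A (f i.castSucc) (f i.succ)) (j : Fin (k + 1)) :
    f j ∈ nbhd A j (f 0) := by
  induction j using Fin.induction with
  | zero => rfl
  | succ i ih => exact Or.inr ⟨f i.castSucc, ih, hf i⟩

lemma IsPathOn.snoc {k : ℕ} {f : Fin (k + 1) → Fin n} {u : Fin n} (hf : IsPathOn A k f)
    (hu : u ∉ Set.range f) (hA : A (f (Fin.last k)) u) :
    IsPathOn A (k + 1) (Fin.snoc f u) := by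
  refine ⟨Fin.snoc_injective_of_injective hf.1 hu, fun i => ?_⟩
  induction i using Fin.lastCases with
  | last => simpa only [Fin.succ_last, Fin.snoc_last, Fin.snoc_castSucc] using hA
  | cast i => simpa only [Fin.succ_castSucc, Fin.snoc_castSucc] using hf.2 i

lemma exists_isPathOn_of_mem_nbhd {ℓ : ℕ} {v u : Fin n} (hu : u ∈ nbhd A ℓ v) :
    ∃ k ≤ ℓ, ∃ f : Fin (k + 1) → Fin n, IsPathOn A k f ∧ f 0 = v ∧ f (Fin.last k) = u := by
  induction ℓ generalizing u with
  | zero =>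
    exact ⟨0, le_rfl, fun _ => v, ⟨fun a b _ => Fin.ext (by omega), Fin.elim0⟩, rfl, hu.symm⟩
  | succ ℓ ih =>
    rcases hu with hu | ⟨w, hw, hwu⟩
    · obtain ⟨k, hk, f, hf⟩ := ih hu
      exact ⟨k, hk.trans ℓ.le_succ, f, hf⟩
    obtain ⟨k, hk, f, hf, hf0, hfk⟩ := ih hw
    by_cases hmem : u ∈ Set.range f
    · -- `u` already lies on the path to `w`, hence within distance `ℓ`
      obtain ⟨j, rfl⟩ := hmem
      have hj : f j ∈ nbhd A ℓ v :=
        nbhd_monotone v (by omega : (j : ℕ) ≤ ℓ) (hf0 ▸ mem_nbhd_of_chain hf.2 j)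
      obtain ⟨k', hk', hpath⟩ := ih hj
      exact ⟨k', hk'.trans ℓ.le_succ, hpath⟩
    · refine ⟨k + 1, by omega, Fin.snoc f u, hf.snoc hmem (hfk ▸ hwu), ?_, Fin.snoc_last _ _⟩
      rw [← Fin.castSucc_zero, Fin.snoc_castSucc, hf0]

lemma Function.Injective.apply_castSucc_ne_apply_succ {k : ℕ} {f : Fin (k + 1) → Fin n}
    (hf : Function.Injective f) (i : Fin k) : f i.castSucc ≠ f i.succ :=
  fun h => (Fin.castSucc_lt_succ (i := i)).ne (hf h)

lemma Function.Injective.eq_of_min_max_eq {k : ℕ} {f : Fin (k + 1) → Fin n}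
    (hf : Function.Injective f) {i j : Fin k}
    (hmin : min (f i.castSucc) (f i.succ) = min (f j.castSucc) (f j.succ))
    (hmax : max (f i.castSucc) (f i.succ) = max (f j.castSucc) (f j.succ)) : i = j := by
  have h₁ : f i.castSucc = f j.castSucc ∨ f i.castSucc = f j.succ := by grind
  have h₂ : f i.succ = f j.castSucc ∨ f i.succ = f j.succ := by grind
  simp only [hf.eq_iff, Fin.ext_iff, Fin.val_castSucc, Fin.val_succ] at h₁ h₂
  omega

end nbhd

section walkSum
variable {V : Type*} (q : V → V → ℝ) (r : V → ℝ)

def walkWeight {k : ℕ} (f : Fin (k + 1) → V) : ℝ :=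
  (∏ i : Fin k, q (f i.castSucc) (f i.succ)) * r (f (Fin.last k))

lemma walkWeight_cons {k : ℕ} (a : V) (f : Fin (k + 1) → V) :
    walkWeight q r (Fin.cons a f : Fin (k + 2) → V) = q a (f 0) * walkWeight q r f := by
  simp only [walkWeight, Fin.prod_univ_succ, Fin.cons_zero, Fin.cons_succ, ← Fin.succ_castSucc,
    ← Fin.succ_last, Fin.castSucc_zero]
  ring

variable [Fintype V]

/-- `walkSum q r k a = (Q ^ k *ᵥ r) a` for the matrix `Q = (q a b)`. -/
def walkSum : ℕ → V → ℝ
  | 0, a => r a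
  | k + 1, a => ∑ b, q a b * walkSum k b

lemma walkSum_eq_sum_cons (k : ℕ) (a : V) :
    walkSum q r k a = ∑ g : Fin k → V, walkWeight q r (Fin.cons a g : Fin (k + 1) → V) := by
  induction k generalizing a with
  | zero => simp [walkSum, walkWeight]
  | succ k ih =>
    rw [← (Fin.consEquiv fun _ => V).sum_comp, Fintype.sum_prod_type, walkSum]
    refine Finset.sum_congr rfl fun b _ => ?_
    simp only [Fin.consEquiv, Equiv.coe_fn_mk, walkWeight_cons, Fin.cons_zero, ← Finset.mul_sum,
      ih]

lemma walkSum_eq_sum (k : ℕ) (a : V) :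
    walkSum q r k a = ∑ f : Fin (k + 1) → V with f 0 = a, walkWeight q r f := by
  rw [walkSum_eq_sum_cons, Finset.sum_filter, ← (Fin.consEquiv fun _ => V).sum_comp,
    Fintype.sum_prod_type, Finset.sum_eq_single a]
  · simp [Fin.consEquiv]
  · intro b _ hb
    simp [hb]
  · simp

lemma walkSum_rankOne_succ (w : V → ℝ) (c : ℝ) (k : ℕ) (a : V) :
    walkSum (fun a b => w a * w b / c) r (k + 1) a =
      w a * ((∑ b, w b * r b) / c) * ((∑ b, w b ^ 2) / c) ^ k := by
  induction k generalizing a with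
  | zero =>
    simp only [walkSum, pow_zero, mul_one, Finset.sum_div, Finset.mul_sum]
    exact Finset.sum_congr rfl fun b _ => by ring
  | succ k ih =>
    set R := (∑ b, w b * r b) / c
    calc ∑ b, w a * w b / c * walkSum (fun a b => w a * w b / c) r (k + 1) b
        = w a * R * ((∑ b, w b ^ 2) / c) ^ k * ∑ b, w b ^ 2 / c := by
          rw [Finset.mul_sum]
          exact Finset.sum_congr rfl fun b _ => by rw [ih]; ring
      _ = _ := by rw [← Finset.sum_div, pow_succ]; ring

end walkSum

lemma geom_sum_le_add_one_pow {x : ℝ} (hx : 0 ≤ x) (m : ℕ) :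
    ∑ i ∈ Finset.range (m + 1), x ^ i ≤ (x + 1) ^ m := by
  rw [add_pow]
  gcongr with i hi
  rw [one_pow, mul_one]
  exact le_mul_of_one_le_right (pow_nonneg hx i)
    (Nat.one_le_cast.2 (Nat.choose_pos (Nat.lt_succ_iff.1 (Finset.mem_range.1 hi))))

lemma wnorm_zero {n : ℕ} (W : Fin n → ℝ) (U : Set (Fin n)) : wnorm W 0 U = U.ncard := by
  simp [wnorm, Set.indicator_apply, Finset.sum_boole, Set.ncard_eq_toFinset_card']

section randomGraph
variable {n : ℕ} {θ : ℝ} {W : Fin n → ℝ}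

lemma gam_nonneg (hθ : 0 ≤ θ) (hW : ∀ v, 0 ≤ W v) (p : ℝ) : 0 ≤ Gam n θ W p :=
  div_nonneg (Finset.sum_nonneg fun u _ => Real.rpow_nonneg (hW u) p) (by positivity)

lemma walkSum_succ_eq_gam (hW : ∀ v, 0 < W v) (p : ℝ) (k : ℕ) (v : Fin n) :
    walkSum (fun a b => W a * W b / (n * θ)) (fun b => W b ^ p) (k + 1) v =
      W v * Gam n θ W (p + 1) * Gam n θ W 2 ^ k := by
  have hmul (b : Fin n) : W b * W b ^ p = W b ^ (p + 1) := by
    rw [Real.rpow_add_one (hW b).ne', mul_comm]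
  simp only [walkSum_rankOne_succ, Gam, hmul, Real.rpow_two]

variable {Ω : Type*} [MeasurableSpace Ω] {P : Measure Ω} {X : Fin n → Fin n → Ω → Bool}

lemma measurableSet_mem_nbhd (hmeas : ∀ u v, Measurable (X u v)) (ℓ : ℕ) (v u : Fin n) :
    MeasurableSet {ω | u ∈ nbhd (fun a b => X a b ω = true) ℓ v} :=
  measurable_pi_lambda _ (fun a => measurable_pi_lambda _ fun b => hmeas a b)
    (MeasurableSet.of_discrete
      (s := {x : Fin n → Fin n → Bool | u ∈ nbhd (fun a b => x a b = true) ℓ v}))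

lemma measure_forall_edges_eq_prod (hsymm : ∀ u v, X u v = X v u)
    (hindep : iIndepFun (fun e : {p : Fin n × Fin n // p.1 < p.2} => X e.1.1 e.1.2) P)
    {k : ℕ} {f : Fin (k + 1) → Fin n} (hf : Function.Injective f) :
    P {ω | ∀ i : Fin k, X (f i.castSucc) (f i.succ) ω = true} =
      ∏ i : Fin k, P {ω | X (f i.castSucc) (f i.succ) ω = true} := by
  -- the edge `{f i, f (i+1)}` in the indexing of `hindep`
  let e (i : Fin k) : {p : Fin n × Fin n // p.1 < p.2} :=
    ⟨(min (f i.castSucc) (f i.succ), max (f i.castSucc) (f i.succ)),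
      min_lt_max.2 (hf.apply_castSucc_ne_apply_succ i)⟩
  have he (i : Fin k) : X (e i).1.1 (e i).1.2 = X (f i.castSucc) (f i.succ) := by
    rcases le_total (f i.castSucc) (f i.succ) with h | h
    · simp [e, h]
    · simp [e, h, hsymm]
  have he_inj : Function.Injective e := fun i j hij =>
    hf.eq_of_min_max_eq (congrArg (·.1.1) hij) (congrArg (·.1.2) hij)
  rw [Set.ofPred_forall]
  refine (hindep.precomp he_inj).meas_iInter fun i => ⟨{true}, trivial, ?_⟩
  simp only [he]
  rfl

lemma measureReal_isPathOn_le (hθ : 0 ≤ θ) (hW : ∀ v, 0 ≤ W v) (hsymm : ∀ u v, X u v = X v u)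
    (hdist : ∀ u v, u ≠ v →
      P {ω | X u v ω = true} = ENNReal.ofReal (min (W u * W v / (n * θ)) 1))
    (hindep : iIndepFun (fun e : {p : Fin n × Fin n // p.1 < p.2} => X e.1.1 e.1.2) P)
    {k : ℕ} (f : Fin (k + 1) → Fin n) :
    P.real {ω | IsPathOn (fun a b => X a b ω = true) k f} ≤
      ∏ i : Fin k, W (f i.castSucc) * W (f i.succ) / (n * θ) := by
  have hq (a b : Fin n) : 0 ≤ W a * W b / (n * θ) := by
    have := hW a; have := hW b; positivity
  by_cases hf : Function.Injective f
  · simp only [IsPathOn, hf, true_and]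
    rw [measureReal_def, measure_forall_edges_eq_prod hsymm hindep hf, ENNReal.toReal_prod]
    gcongr with i
    rw [hdist _ _ (hf.apply_castSucc_ne_apply_succ i),
      ENNReal.toReal_ofReal (le_min (hq _ _) zero_le_one)]
    exact min_le_left _ _
  · simp only [IsPathOn, hf, false_and, Set.ofPred_false, measureReal_empty]
    exact Finset.prod_nonneg fun i _ => hq _ _

variable [IsFiniteMeasure P]

lemma measureReal_mem_nbhd_le (A : Ω → Fin n → Fin n → Prop) (ℓ : ℕ) (v u : Fin n) :
    P.real {ω | u ∈ nbhd (A ω) ℓ v} ≤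
      ∑ k ∈ Finset.range (ℓ + 1), ∑ f : Fin (k + 1) → Fin n with f 0 = v ∧ f (Fin.last k) = u,
        P.real {ω | IsPathOn (A ω) k f} := by
  refine (measureReal_mono (fun ω hω => ?_) (measure_ne_top P _)).trans <|
    (measureReal_biUnion_finset_le _ _).trans <|
      Finset.sum_le_sum fun k _ => measureReal_biUnion_finset_le _ _
  obtain ⟨k, hk, f, hf, hf0, hfk⟩ := exists_isPathOn_of_mem_nbhd hω
  simp only [Set.mem_iUnion]
  exact ⟨k, by simpa [Nat.lt_succ_iff] using hk, f, by simp [hf0, hfk], hf⟩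

lemma integral_wnorm_eq_sum (W : Fin n → ℝ) (p : ℝ) {S : Ω → Set (Fin n)}
    (hS : ∀ u, MeasurableSet {ω | u ∈ S ω}) :
    ∫ ω, wnorm W p (S ω) ∂P = ∑ u, W u ^ p * P.real {ω | u ∈ S ω} := by
  have hind (u : Fin n) : (fun ω => (S ω).indicator (fun u => W u ^ p) u) =
      {ω | u ∈ S ω}.indicator fun _ => W u ^ p := by
    ext ω
    simp only [Set.indicator_apply, Set.mem_ofPred_eq]
  simp only [wnorm]
  rw [integral_finsetSum _ fun u _ => ?_]
  · refine Finset.sum_congr rfl fun u _ => ?_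
    rw [hind, integral_indicator_const _ (hS u), smul_eq_mul, mul_comm]
  · rw [hind]
    exact (integrable_const _).indicator (hS u)

lemma integral_wnorm_nbhd_le_sum_walkSum (hθ : 0 ≤ θ) (hW : ∀ v, 0 ≤ W v)
    (hmeas : ∀ u v, Measurable (X u v)) (hsymm : ∀ u v, X u v = X v u)
    (hdist : ∀ u v, u ≠ v →
      P {ω | X u v ω = true} = ENNReal.ofReal (min (W u * W v / (n * θ)) 1))
    (hindep : iIndepFun (fun e : {p : Fin n × Fin n // p.1 < p.2} => X e.1.1 e.1.2) P)
    (p : ℝ) (ℓ : ℕ) (v : Fin n) :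
    ∫ ω, wnorm W p (nbhd (fun a b => X a b ω = true) ℓ v) ∂P ≤
      ∑ k ∈ Finset.range (ℓ + 1),
        walkSum (fun a b => W a * W b / (n * θ)) (fun b => W b ^ p) k v := by
  set q : Fin n → Fin n → ℝ := fun a b => W a * W b / (n * θ)
  rw [integral_wnorm_eq_sum W p (measurableSet_mem_nbhd hmeas ℓ v)]
  calc ∑ u, W u ^ p * P.real {ω | u ∈ nbhd (fun a b => X a b ω = true) ℓ v}
      ≤ ∑ u, W u ^ p * ∑ k ∈ Finset.range (ℓ + 1),
          ∑ f : Fin (k + 1) → Fin n with f 0 = v ∧ f (Fin.last k) = u,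
            ∏ i : Fin k, q (f i.castSucc) (f i.succ) := by
        gcongr with u
        · exact Real.rpow_nonneg (hW u) p
        refine (measureReal_mem_nbhd_le _ ℓ v u).trans ?_
        gcongr with k _ f
        exact measureReal_isPathOn_le hθ hW hsymm hdist hindep f
    _ = ∑ k ∈ Finset.range (ℓ + 1), ∑ u,
          ∑ f : Fin (k + 1) → Fin n with f 0 = v ∧ f (Fin.last k) = u,
            walkWeight q (fun b => W b ^ p) f := by
        simp_rw [Finset.mul_sum]
        rw [Finset.sum_comm]
        refine Finset.sum_congr rfl fun k _ => Finset.sum_congr rfl fun u _ =>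
          Finset.sum_congr rfl fun f hf => ?_
        rw [walkWeight, (Finset.mem_filter.1 hf).2.2, mul_comm]
    _ = _ := by
        refine Finset.sum_congr rfl fun k _ => ?_
        rw [walkSum_eq_sum, ← Finset.sum_fiberwise _ fun f : Fin (k + 1) → Fin n => f (Fin.last k)]
        simp only [Finset.filter_filter]
        congr!

end randomGraph

theorem stmt0_general
    (n : ℕ) (θ : ℝ) (hθ : 0 < θ)
    (W : Fin n → ℝ) (hW : ∀ v, 0 < W v)
    {Ω : Type} [MeasurableSpace Ω] (P : Measure Ω) [IsProbabilityMeasure P]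
    (X : Fin n → Fin n → Ω → Bool)
    (hmeas : ∀ u v, Measurable (X u v))
    (hsymm : ∀ u v, X u v = X v u)
    (hdist : ∀ u v, u ≠ v →
      P {ω | X u v ω = true} = ENNReal.ofReal (min (W u * W v / (n * θ)) 1))
    (hindep : iIndepFun
      (fun e : {p : Fin n × Fin n // p.1 < p.2} => X e.1.1 e.1.2) P) :
    (∀ p : ℝ, 0 ≤ p → ∀ ℓ : ℕ, 1 ≤ ℓ → ∀ v : Fin n,
      ∫ ω, wnorm W p (nbhd (fun a b => X a b ω = true) ℓ v) ∂P
        ≤ W v ^ p + W v * Gam n θ W (p + 1) * (Gam n θ W 2 + 1) ^ (ℓ - 1)) ∧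
    (∀ ℓ : ℕ, 1 ≤ ℓ → ∀ v : Fin n,
      ∫ ω, ((nbhd (fun a b => X a b ω = true) ℓ v).ncard : ℝ) ∂P
        ≤ 1 + W v * Gam n θ W 1 * (Gam n θ W 2 + 1) ^ (ℓ - 1)) ∧
    (∀ ℓ : ℕ, ∀ v : Fin n,
      ∫ ω, wnorm W 1 (nbhd (fun a b => X a b ω = true) ℓ v) ∂P
        ≤ W v * (Gam n θ W 2 + 1) ^ ℓ) := by
  have hW₀ (v : Fin n) : 0 ≤ W v := (hW v).le
  have hΓ (p : ℝ) : 0 ≤ Gam n θ W p := gam_nonneg hθ.le hW₀ p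
  have hE := integral_wnorm_nbhd_le_sum_walkSum hθ.le hW₀ hmeas hsymm hdist hindep
  have hsucc (p : ℝ) (m : ℕ) (v : Fin n) :
      ∫ ω, wnorm W p (nbhd (fun a b => X a b ω = true) (m + 1) v) ∂P
        ≤ W v ^ p + W v * Gam n θ W (p + 1) * (Gam n θ W 2 + 1) ^ m := by
    refine (hE p (m + 1) v).trans ?_
    rw [Finset.sum_range_succ', add_comm]
    simp only [walkSum_succ_eq_gam hW, ← Finset.mul_sum]
    exact add_le_add le_rfl (mul_le_mul_of_nonneg_left (geom_sum_le_add_one_pow (hΓ 2) m)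
      (mul_nonneg (hW₀ v) (hΓ _)))
  refine ⟨fun p _ ℓ hℓ v => ?_, fun ℓ hℓ v => ?_, fun ℓ v => ?_⟩
  · obtain ⟨m, rfl⟩ := Nat.exists_eq_add_of_le' hℓ
    exact hsucc p m v
  · obtain ⟨m, rfl⟩ := Nat.exists_eq_add_of_le' hℓ
    simpa [wnorm_zero] using hsucc 0 m v
  · have hwalk (k : ℕ) : walkSum (fun a b => W a * W b / (n * θ)) (fun b => W b ^ (1 : ℝ)) k v
        = W v * Gam n θ W 2 ^ k := by
      cases k with
      | zero => simp [walkSum]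
      | succ k => rw [walkSum_succ_eq_gam hW, one_add_one_eq_two, pow_succ']; ring
    refine (hE 1 ℓ v).trans ?_
    simp only [hwalk, ← Finset.mul_sum]
    exact mul_le_mul_of_nonneg_left (geom_sum_le_add_one_pow (hΓ 2) ℓ) (hW₀ v)

theorem stmt0
    (n : ℕ) (hn : 1 ≤ n) (θ : ℝ) (hθ : 0 < θ)
    (W : Fin n → ℝ) (hW : ∀ v, 0 < W v)
    {Ω : Type} [MeasurableSpace Ω] (P : Measure Ω) [IsProbabilityMeasure P]
    (X : Fin n → Fin n → Ω → Bool)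
    (hmeas : ∀ u v, Measurable (X u v))
    (hsymm : ∀ u v, X u v = X v u)
    (hdiag : ∀ v, X v v = fun _ => false)
    (hdist : ∀ u v, u ≠ v →
      P {ω | X u v ω = true} = ENNReal.ofReal (min (W u * W v / (n * θ)) 1))
    (hindep : iIndepFun
      (fun e : {p : Fin n × Fin n // p.1 < p.2} => X e.1.1 e.1.2) P) :
    (∀ p : ℝ, 0 ≤ p → ∀ ℓ : ℕ, 1 ≤ ℓ → ∀ v : Fin n,
      ∫ ω, wnorm W p (nbhd (fun a b => X a b ω = true) ℓ v) ∂P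
        ≤ W v ^ p + W v * Gam n θ W (p + 1) * (Gam n θ W 2 + 1) ^ (ℓ - 1)) ∧
    (∀ ℓ : ℕ, 1 ≤ ℓ → ∀ v : Fin n,
      ∫ ω, ((nbhd (fun a b => X a b ω = true) ℓ v).ncard : ℝ) ∂P
        ≤ 1 + W v * Gam n θ W 1 * (Gam n θ W 2 + 1) ^ (ℓ - 1)) ∧
    (∀ ℓ : ℕ, ∀ v : Fin n,
      ∫ ω, wnorm W 1 (nbhd (fun a b => X a b ω = true) ℓ v) ∂P
        ≤ W v * (Gam n θ W 2 + 1) ^ ℓ) :=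
  stmt0_general n θ hθ W hW P X hmeas hsymm hdist hindep
end
end

section
/- For every real p ≥ 0, every integer ℓ ≥ 1 and every vertex set 𝒱 ⊆ V_n, one has E[‖S_ℓ(𝒱)‖_p] ≤ ‖𝒱‖_p + ‖𝒱‖·Γ_{p+1,n}·(Γ_{2,n}+1)^{ℓ−1}; consequently, for p = 1, E[‖S_ℓ(𝒱)‖] ≤ ‖𝒱‖·(Γ_{2,n}+1)^ℓ for every ℓ ∈ ℕ. -/
open MeasureTheory ProbabilityTheory Real
open scoped ENNReal

noncomputable section
open Classical

-- walk existence
lemma nbhd_walk {n : ℕ} (G : SimpleGraph (Fin n)) (ℓ : ℕ) (v u : Fin n)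
    (h : u ∈ nbhd G.Adj ℓ v) : ∃ w : G.Walk v u, w.length ≤ ℓ := by
  induction ℓ generalizing u with
  | zero => simp only [nbhd] at h; subst h; exact ⟨SimpleGraph.Walk.nil, le_refl _⟩
  | succ ℓ ih =>
    rcases h with h | ⟨w, hw, hadj⟩
    · obtain ⟨p, hp⟩ := ih u h; exact ⟨p, hp.trans (Nat.le_succ _)⟩
    · obtain ⟨p, hp⟩ := ih w hw
      exact ⟨p.concat hadj, by rw [SimpleGraph.Walk.length_concat]; omega⟩

lemma support_get_eq_getVert {V : Type*} {G : SimpleGraph V} {u v : V} (p : G.Walk u v) :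
    ∀ (i : ℕ) (h : i < p.support.length), p.support.get ⟨i, h⟩ = p.getVert i := by
  induction p with
  | nil =>
    intro i h
    simp only [SimpleGraph.Walk.support_nil, List.length_singleton] at h
    interval_cases i
    · rfl
  | cons ha q ih =>
    intro i h
    cases i with
    | zero => rfl
    | succ i =>
      simp only [SimpleGraph.Walk.support_cons, List.get_cons_succ,
        SimpleGraph.Walk.getVert_cons_succ]
      exact ih i (by simpa [SimpleGraph.Walk.support_cons] using h)

lemma exists_path_of_nbhd {n : ℕ} (G : SimpleGraph (Fin n)) (ℓ : ℕ) (v u : Fin n)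
    (h : u ∈ nbhd G.Adj ℓ v) :
    ∃ k, k ≤ ℓ ∧ ∃ f : Fin (k + 1) → Fin n,
      IsPathOn G.Adj k f ∧ f 0 = v ∧ f (Fin.last k) = u := by
  obtain ⟨w, hw⟩ := nbhd_walk G ℓ v u h
  set p := w.bypass with hp
  have hpath : p.IsPath := w.bypass_isPath
  have hlen : p.length ≤ ℓ := (w.length_bypass_le).trans hw
  refine ⟨p.length, hlen, fun i => p.getVert i, ⟨?_, ?_⟩, ?_, ?_⟩
  · intro i j hij
    have h1 : (i : ℕ) < p.support.length := by rw [SimpleGraph.Walk.length_support]; omega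
    have h2 : (j : ℕ) < p.support.length := by rw [SimpleGraph.Walk.length_support]; omega
    simp only at hij
    rw [← support_get_eq_getVert p i h1, ← support_get_eq_getVert p j h2] at hij
    have h3 := List.nodup_iff_injective_get.1 hpath.support_nodup hij
    exact Fin.ext (by simpa using h3)
  · intro i
    exact p.adj_getVert_succ (by simp)
  · exact p.getVert_zero
  · exact p.getVert_length

lemma geom_bound (x : ℝ) (hx : 0 ≤ x) (m : ℕ) :
    ∑ j ∈ Finset.range (m + 1), x ^ j ≤ (x + 1) ^ m := by
  induction m with
  | zero => simp
  | succ m ih =>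
    rw [Finset.sum_range_succ]
    have h1 : x ^ (m + 1) ≤ x * (x + 1) ^ m := by
      rw [pow_succ, mul_comm]
      exact mul_le_mul_of_nonneg_left (pow_le_pow_left₀ hx (by linarith) m) hx
    have h2 : (x + 1) ^ (m + 1) = (x + 1) ^ m + x * (x + 1) ^ m := by rw [pow_succ]; ring
    linarith

lemma sum_Icc_pow (x : ℝ) (ℓ : ℕ) :
    ∑ k ∈ Finset.Icc 1 ℓ, x ^ (k - 1) = ∑ j ∈ Finset.range ℓ, x ^ j := by
  apply Finset.sum_nbij' (fun k => k - 1) (fun j => j + 1) <;>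
    simp +contextual [Finset.mem_Icc, Finset.mem_range] <;> omega

-- telescoping product
lemma tele_prod (m : ℕ) (g : Fin (m + 2) → ℝ) (r : ℝ) :
    ∏ i : Fin (m + 1), (g i.castSucc * g i.succ * r)
      = g 0 * g (Fin.last (m + 1)) * r ^ (m + 1) *
        (∏ i : Fin m, g i.succ.castSucc) ^ 2 := by
  have h1 : ∏ i : Fin (m + 1), g i.castSucc = g 0 * ∏ i : Fin m, g i.succ.castSucc := by
    rw [Fin.prod_univ_succ (f := fun j : Fin (m+1) => g j.castSucc)]
    simp
  have h2 : ∏ i : Fin (m + 1), g i.succ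
      = (∏ i : Fin m, g i.succ.castSucc) * g (Fin.last (m + 1)) := by
    rw [Fin.prod_univ_castSucc (f := fun j : Fin (m+1) => g j.succ)]
    simp [-Fin.castSucc_succ, Fin.succ_castSucc]
  rw [Finset.prod_mul_distrib, Finset.prod_mul_distrib, h1, h2]
  simp [Finset.prod_const]
  ring

lemma meas_nbhd {n : ℕ} {Ω : Type} [MeasurableSpace Ω] (X : Fin n → Fin n → Ω → Bool)
    (hmeas : ∀ u v, Measurable (X u v)) (ℓ : ℕ) (v u : Fin n) :
    MeasurableSet {ω | u ∈ nbhd (fun a b => X a b ω = true) ℓ v} := by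
  induction ℓ generalizing u with
  | zero =>
    have : {ω | u ∈ nbhd (fun a b => X a b ω = true) 0 v} = (if u = v then Set.univ else ∅) := by
      ext ω; simp only [nbhd, Set.mem_setOf_eq, Set.mem_singleton_iff]
      split <;> simp_all
    rw [this]; split <;> simp
  | succ ℓ ih =>
    have : {ω | u ∈ nbhd (fun a b => X a b ω = true) (ℓ+1) v}
        = {ω | u ∈ nbhd (fun a b => X a b ω = true) ℓ v}
          ∪ ⋃ w : Fin n, ({ω | w ∈ nbhd (fun a b => X a b ω = true) ℓ v}
              ∩ {ω | X w u ω = true}) := by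
      ext ω
      simp only [nbhd, Set.mem_union, Set.mem_setOf_eq, Set.mem_iUnion, Set.mem_inter_iff]
    rw [this]
    exact (ih u).union (MeasurableSet.iUnion fun w =>
      (ih w).inter ((hmeas w u) (by trivial : MeasurableSet {true})))

lemma path_prob {n : ℕ} (θ : ℝ) (hnθ : 0 < (n : ℝ) * θ)
    (W : Fin n → ℝ) (hW : ∀ v, 0 < W v)
    {Ω : Type} [MeasurableSpace Ω] (P : Measure Ω) [IsProbabilityMeasure P]
    (X : Fin n → Fin n → Ω → Bool)
    (hsymm : ∀ u v, X u v = X v u)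
    (hdist : ∀ u v, u ≠ v →
      P {ω | X u v ω = true} = ENNReal.ofReal (min (W u * W v / (n * θ)) 1))
    (hindep : iIndepFun
      (fun e : {p : Fin n × Fin n // p.1 < p.2} => X e.1.1 e.1.2) P)
    (k : ℕ) (f : Fin (k + 1) → Fin n) (hf : Function.Injective f) :
    P (⋂ i : Fin k, {ω | X (f i.castSucc) (f i.succ) ω = true})
      ≤ ENNReal.ofReal (∏ i : Fin k, (W (f i.castSucc) * W (f i.succ) / (n * θ))) := by
  have hne : ∀ i : Fin k, f i.castSucc ≠ f i.succ := fun i =>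
    fun h => absurd (hf h) (Fin.ne_of_lt (Fin.castSucc_lt_succ (i := i)))
  set e : Fin k → {p : Fin n × Fin n // p.1 < p.2} := fun i =>
    if h : f i.castSucc < f i.succ then ⟨(f i.castSucc, f i.succ), h⟩
    else ⟨(f i.succ, f i.castSucc), lt_of_le_of_ne (not_lt.1 h) (hne i).symm⟩ with he
  set T : {p : Fin n × Fin n // p.1 < p.2} → Set Ω :=
    fun j => {ω | X j.1.1 j.1.2 ω = true} with hT
  have hSe : ∀ i : Fin k, {ω | X (f i.castSucc) (f i.succ) ω = true} = T (e i) := by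
    intro i
    simp only [he, hT]
    split
    · rfl
    · rw [hsymm]
  have einj : Function.Injective e := by
    intro i j h
    simp only [he] at h
    apply Fin.ext
    split_ifs at h with h1 h2 h2 <;>
      simp only [Subtype.mk.injEq, Prod.mk.injEq] at h <;>
      obtain ⟨ha, hb⟩ := h
    · have := congrArg Fin.val (hf ha); simpa using this
    · have h3 := congrArg Fin.val (hf ha); have h4 := congrArg Fin.val (hf hb)
      simp [Fin.val_succ] at h3 h4; omega
    · have h3 := congrArg Fin.val (hf ha); have h4 := congrArg Fin.val (hf hb)
      simp [Fin.val_succ] at h3 h4; omega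
    · have := congrArg Fin.val (hf hb); simpa using this
  have hset : (⋂ i : Fin k, {ω | X (f i.castSucc) (f i.succ) ω = true})
      = ⋂ j ∈ Finset.image e Finset.univ, T j := by
    rw [Finset.set_biInter_finset_image]
    exact Set.iInter_congr fun i => by rw [hSe i]; simp
  rw [hset]
  have hPeq : P (⋂ j ∈ Finset.image e Finset.univ, T j)
      = ∏ j ∈ Finset.image e Finset.univ, P (T j) := by
    refine hindep.meas_biInter (fun j _ => ⟨{true}, trivial, rfl⟩)
  rw [hPeq, Finset.prod_image (fun i _ j _ h => einj h)]
  have hbd : ∀ i : Fin k, P (T (e i))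
      ≤ ENNReal.ofReal (W (f i.castSucc) * W (f i.succ) / (n * θ)) := by
    intro i
    rw [← hSe i, ]
    rcases eq_or_ne (f i.castSucc) (f i.succ) with h | h
    · exact absurd h (hne i)
    · rw [hdist _ _ h]
      exact ENNReal.ofReal_le_ofReal (min_le_left _ _)
  calc ∏ i : Fin k, P (T (e i))
      ≤ ∏ i : Fin k, ENNReal.ofReal (W (f i.castSucc) * W (f i.succ) / (n * θ)) :=
        Finset.prod_le_prod' (fun i _ => hbd i)
    _ = ENNReal.ofReal (∏ i : Fin k, (W (f i.castSucc) * W (f i.succ) / (n * θ))) := by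
        rw [ENNReal.ofReal_prod_of_nonneg]
        intro i _
        exact div_nonneg (mul_nonneg (hW _).le (hW _).le) hnθ.le

lemma comb_bound {n : ℕ} (θ : ℝ) (hnθ : 0 < (n : ℝ) * θ)
    (W : Fin n → ℝ) (hW : ∀ v, 0 < W v) (𝒱 : Set (Fin n)) (u : Fin n) (m : ℕ) :
    ∑ f ∈ Finset.univ.filter (fun f : Fin (m + 2) → Fin n =>
        Function.Injective f ∧ f 0 ∈ 𝒱 ∧ f (Fin.last (m + 1)) = u),
      ∏ i : Fin (m + 1), (W (f i.castSucc) * W (f i.succ) / (n * θ))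
    ≤ (∑ v, Set.indicator 𝒱 (fun x => W x ^ (1:ℝ)) v)
        * ((∑ x, W x ^ (2:ℝ)) / (n * θ)) ^ m * (W u / (n * θ)) := by
  classical
  set c : Fin (m + 2) → Fin n → ℝ := fun j x =>
    if j = 0 then Set.indicator 𝒱 (fun y => W y ^ (1:ℝ)) x
    else if j = Fin.last (m + 1) then (if x = u then W x / (n * θ) else 0)
    else W x ^ (2:ℝ) / (n * θ) with hc
  have hrpow1 : ∀ x : Fin n, W x ^ (1:ℝ) = W x := fun x => Real.rpow_one _
  have hrpow2 : ∀ x : Fin n, W x ^ (2:ℝ) = W x * W x := by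
    intro x
    rw [show (2:ℝ) = ((2:ℕ):ℝ) by norm_num, Real.rpow_natCast]
    ring
  have hcnonneg : ∀ j x, 0 ≤ c j x := by
    intro j x
    simp only [hc]
    split_ifs with h1 h2 h3
    · exact Set.indicator_nonneg (fun y _ => by rw [hrpow1]; exact (hW y).le) x
    · exact div_nonneg (hW x).le hnθ.le
    · exact le_refl 0
    · exact div_nonneg (by rw [hrpow2]; exact mul_nonneg (hW x).le (hW x).le) hnθ.le
  have hstep1 : ∀ f ∈ Finset.univ.filter (fun f : Fin (m + 2) → Fin n =>
        Function.Injective f ∧ f 0 ∈ 𝒱 ∧ f (Fin.last (m + 1)) = u),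
      ∏ i : Fin (m + 1), (W (f i.castSucc) * W (f i.succ) / (n * θ))
        = ∏ j : Fin (m + 2), c j (f j) := by
    intro f hf
    rw [Finset.mem_filter] at hf
    obtain ⟨-, hinj, h0, hlast⟩ := hf
    have hL : ∏ i : Fin (m + 1), (W (f i.castSucc) * W (f i.succ) / (n * θ))
        = ∏ i : Fin (m + 1), ((fun j => W (f j)) i.castSucc * (fun j => W (f j)) i.succ
            * (1 / (n * θ))) := by
      apply Finset.prod_congr rfl; intro i _; field_simp
    rw [hL, tele_prod m (fun j => W (f j)) (1 / (n * θ))]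
    rw [Fin.prod_univ_succ (f := fun j : Fin (m + 2) => c j (f j))]
    rw [Fin.prod_univ_castSucc (f := fun i : Fin (m + 1) => c i.succ (f i.succ))]
    have hc0 : c 0 (f 0) = W (f 0) := by
      simp only [hc, if_pos rfl, Set.indicator_of_mem h0, hrpow1]
    have hclast : c (Fin.last m).succ (f (Fin.last m).succ) = W u / (n * θ) := by
      rw [Fin.succ_last]
      simp only [hc, hlast]
      simp
    have hcmid : ∀ j : Fin (m + 2), j ≠ 0 → j ≠ Fin.last (m + 1) →
        c j (f j) = W (f j) * W (f j) / (n * θ) := by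
      intro j hj0 hjl
      simp only [hc, if_neg hj0, if_neg hjl, hrpow2]
    have hmid : ∀ i : Fin m, c (i.castSucc).succ (f (i.castSucc).succ)
        = W (f i.succ.castSucc) * W (f i.succ.castSucc) / (n * θ) := by
      intro i
      rw [hcmid _ (Fin.succ_ne_zero _) (by simp [Fin.ext_iff]; omega), Fin.succ_castSucc]
    rw [hc0, hclast, Finset.prod_congr rfl (fun i _ => hmid i)]
    have hprod : ∏ i : Fin m, (W (f i.succ.castSucc) * W (f i.succ.castSucc) / (n * θ))
        = (∏ i : Fin m, W (f i.succ.castSucc)) ^ 2 * (1 / (n * θ)) ^ m := by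
      have : ∀ i : Fin m, W (f i.succ.castSucc) * W (f i.succ.castSucc) / (n * θ)
          = (W (f i.succ.castSucc) * W (f i.succ.castSucc)) * (1 / (n * θ)) := by
        intro i; field_simp
      rw [Finset.prod_congr rfl (fun i _ => this i), Finset.prod_mul_distrib,
        Finset.prod_const, Finset.prod_mul_distrib, Finset.card_univ, Fintype.card_fin]
      ring
    rw [hprod, hlast]
    ring
  rw [Finset.sum_congr rfl hstep1]
  have hstep2 : ∑ f ∈ Finset.univ.filter (fun f : Fin (m + 2) → Fin n =>
        Function.Injective f ∧ f 0 ∈ 𝒱 ∧ f (Fin.last (m + 1)) = u),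
      ∏ j : Fin (m + 2), c j (f j)
      ≤ ∑ f : Fin (m + 2) → Fin n, ∏ j : Fin (m + 2), c j (f j) := by
    apply Finset.sum_le_sum_of_subset_of_nonneg (Finset.filter_subset _ _)
    intro f _ _
    exact Finset.prod_nonneg fun j _ => hcnonneg j (f j)
  refine hstep2.trans ?_
  rw [← Fintype.prod_sum (fun j x => c j x)]
  rw [Fin.prod_univ_succ (f := fun j : Fin (m + 2) => ∑ x, c j x)]
  rw [Fin.prod_univ_castSucc (f := fun i : Fin (m + 1) => ∑ x, c i.succ x)]
  have e0 : ∑ x, c 0 x = ∑ v, Set.indicator 𝒱 (fun x => W x ^ (1:ℝ)) v := by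
    apply Finset.sum_congr rfl; intro x _; simp only [hc, if_pos rfl]
  have elast : ∑ x, c (Fin.last m).succ x = W u / (n * θ) := by
    rw [Fin.succ_last]
    have : ∀ x, c (Fin.last (m + 1)) x = if x = u then W x / (n * θ) else 0 := by
      intro x
      simp only [hc]
      simp [Fin.ext_iff]
    rw [Finset.sum_congr rfl (fun x _ => this x), Finset.sum_ite_eq' Finset.univ u]
    simp
  have emid : ∀ i : Fin m, ∑ x, c (i.castSucc).succ x = (∑ x, W x ^ (2:ℝ)) / (n * θ) := by
    intro i
    have : ∀ x, c (i.castSucc).succ x = W x ^ (2:ℝ) / (n * θ) := by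
      intro x
      simp only [hc]
      rw [if_neg (Fin.succ_ne_zero _), if_neg (by simp [Fin.ext_iff]; omega)]
    rw [Finset.sum_congr rfl (fun x _ => this x), ← Finset.sum_div]
  rw [e0, elast, Finset.prod_congr rfl (fun i _ => emid i), Finset.prod_const,
    Finset.card_univ, Fintype.card_fin]
  ring_nf
  exact le_refl _

theorem stmt1
    (n : ℕ) (hn : 1 ≤ n) (θ : ℝ) (hθ : 0 < θ)
    (W : Fin n → ℝ) (hW : ∀ v, 0 < W v)
    {Ω : Type} [MeasurableSpace Ω] (P : Measure Ω) [IsProbabilityMeasure P]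
    (X : Fin n → Fin n → Ω → Bool)
    (hmeas : ∀ u v, Measurable (X u v))
    (hsymm : ∀ u v, X u v = X v u)
    (hdiag : ∀ v, X v v = fun _ => false)
    (hdist : ∀ u v, u ≠ v →
      P {ω | X u v ω = true} = ENNReal.ofReal (min (W u * W v / (n * θ)) 1))
    (hindep : iIndepFun
      (fun e : {p : Fin n × Fin n // p.1 < p.2} => X e.1.1 e.1.2) P) :
    (∀ p : ℝ, 0 ≤ p → ∀ ℓ : ℕ, 1 ≤ ℓ → ∀ 𝒱 : Set (Fin n),
      ∫ ω, wnorm W p (⋃ v ∈ 𝒱, nbhd (fun a b => X a b ω = true) ℓ v) ∂P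
        ≤ wnorm W p 𝒱 + wnorm W 1 𝒱 * Gam n θ W (p + 1) * (Gam n θ W 2 + 1) ^ (ℓ - 1)) ∧
    (∀ ℓ : ℕ, ∀ 𝒱 : Set (Fin n),
      ∫ ω, wnorm W 1 (⋃ v ∈ 𝒱, nbhd (fun a b => X a b ω = true) ℓ v) ∂P
        ≤ wnorm W 1 𝒱 * (Gam n θ W 2 + 1) ^ ℓ) := by
  classical
  have hnθ : 0 < (n : ℝ) * θ := by
    have h0 : (0:ℝ) < n := by exact_mod_cast hn
    exact mul_pos h0 hθ
  have hw1 : ∀ 𝒱 : Set (Fin n), 0 ≤ wnorm W 1 𝒱 := by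
    intro 𝒱
    apply Finset.sum_nonneg
    intro u _
    exact Set.indicator_nonneg (fun y _ => Real.rpow_nonneg (hW y).le 1) u
  have hG : ∀ q : ℝ, 0 ≤ Gam n θ W q := by
    intro q
    exact div_nonneg (Finset.sum_nonneg fun u _ => Real.rpow_nonneg (hW u).le q) hnθ.le
  have main : ∀ p : ℝ, 0 ≤ p → ∀ ℓ : ℕ, 1 ≤ ℓ → ∀ 𝒱 : Set (Fin n),
      ∫ ω, wnorm W p (⋃ v ∈ 𝒱, nbhd (fun a b => X a b ω = true) ℓ v) ∂P
        ≤ wnorm W p 𝒱 + wnorm W 1 𝒱 * Gam n θ W (p + 1) * (Gam n θ W 2 + 1) ^ (ℓ - 1) := by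
    intro p hp ℓ hℓ 𝒱
    set Eu : Fin n → Set Ω :=
      fun u => {ω | u ∈ ⋃ v ∈ 𝒱, nbhd (fun a b => X a b ω = true) ℓ v} with hEu
    have hEumeas : ∀ u, MeasurableSet (Eu u) := by
      intro u
      have : Eu u = ⋃ v ∈ 𝒱, {ω | u ∈ nbhd (fun a b => X a b ω = true) ℓ v} := by
        ext ω; simp [hEu]
      rw [this]
      exact MeasurableSet.biUnion (Set.to_countable _) (fun v _ => meas_nbhd X hmeas ℓ v u)
    -- rewrite the integral
    have hint : ∫ ω, wnorm W p (⋃ v ∈ 𝒱, nbhd (fun a b => X a b ω = true) ℓ v) ∂P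
        = ∑ u, (P (Eu u)).toReal * (W u ^ p) := by
      have heq : ∀ ω, wnorm W p (⋃ v ∈ 𝒱, nbhd (fun a b => X a b ω = true) ℓ v)
          = ∑ u, Set.indicator (Eu u) (fun _ => W u ^ p) ω := by
        intro ω
        unfold wnorm
        apply Finset.sum_congr rfl
        intro u _
        by_cases h : u ∈ ⋃ v ∈ 𝒱, nbhd (fun a b => X a b ω = true) ℓ v
        · rw [Set.indicator_of_mem h]
          rw [Set.indicator_of_mem (show ω ∈ Eu u from h)]
        · rw [Set.indicator_of_notMem h]
          rw [Set.indicator_of_notMem (show ω ∉ Eu u from h)]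
      simp only [heq]
      rw [integral_finset_sum Finset.univ
        (fun u _ => ((integrable_const (W u ^ p)).indicator (hEumeas u)))]
      apply Finset.sum_congr rfl; intro u _
      rw [integral_indicator_const _ (hEumeas u)]
      simp [smul_eq_mul, measureReal_def]
    rw [hint]
    -- per-u probability bound for u outside 𝒱
    have hub : ∀ u, u ∉ 𝒱 → (P (Eu u)).toReal ≤
        wnorm W 1 𝒱 * (∑ k ∈ Finset.Icc 1 ℓ, Gam n θ W 2 ^ (k - 1)) * (W u / (n * θ)) := by
      intro u hu
      set Fk : ∀ k : ℕ, Finset (Fin (k + 1) → Fin n) := fun k =>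
        Finset.univ.filter (fun f => Function.Injective f ∧ f 0 ∈ 𝒱 ∧ f (Fin.last k) = u)
        with hFk
      set E : ∀ k : ℕ, (Fin (k + 1) → Fin n) → Set Ω := fun k f =>
        ⋂ i : Fin k, {ω | X (f i.castSucc) (f i.succ) ω = true} with hE
      have hsub : Eu u ⊆ ⋃ k ∈ Finset.Icc 1 ℓ, ⋃ f ∈ Fk k, E k f := by
        intro ω hω
        simp only [hEu, Set.mem_setOf_eq, Set.mem_iUnion] at hω
        obtain ⟨v, hv, hnb⟩ := hω
        set G : SimpleGraph (Fin n) :=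
          { Adj := fun a b => X a b ω = true
            symm := by
              refine ⟨fun a b h => ?_⟩
              rw [hsymm b a]; exact h
            loopless := by
              refine ⟨fun a h => ?_⟩
              rw [hdiag a] at h
              simp at h } with hGdef
        obtain ⟨k, hkℓ, f, ⟨hinj, hadj⟩, hf0, hflast⟩ :=
          exists_path_of_nbhd G ℓ v u hnb
        have hk1 : 1 ≤ k := by
          by_contra hcon
          push_neg at hcon
          interval_cases k
          apply hu
          have huv : u = v := by
            rw [← hflast, ← hf0]
            exact congrArg f (Fin.ext (by simp))
          rwa [huv]
        simp only [Set.mem_iUnion]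
        refine ⟨k, by simp [Finset.mem_Icc]; omega, f, ?_, ?_⟩
        · simp only [hFk, Finset.mem_filter]
          exact ⟨Finset.mem_univ _, hinj, hf0 ▸ hv, hflast⟩
        · simp only [hE, Set.mem_iInter]
          exact fun i => hadj i
      have hP1 : P (Eu u) ≤ ∑ k ∈ Finset.Icc 1 ℓ, ∑ f ∈ Fk k, P (E k f) :=
        (measure_mono hsub).trans <| (measure_biUnion_finset_le _ _).trans <|
          Finset.sum_le_sum fun k _ => measure_biUnion_finset_le _ _
      have hP2 : ∀ k ∈ Finset.Icc 1 ℓ, ∑ f ∈ Fk k, P (E k f)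
          ≤ ENNReal.ofReal (wnorm W 1 𝒱 * Gam n θ W 2 ^ (k - 1) * (W u / (n * θ))) := by
        intro k hk
        rw [Finset.mem_Icc] at hk
        obtain ⟨m, rfl⟩ : ∃ m, k = m + 1 := ⟨k - 1, by omega⟩
        have h1 : ∑ f ∈ Fk (m + 1), P (E (m + 1) f)
            ≤ ∑ f ∈ Fk (m + 1), ENNReal.ofReal
              (∏ i : Fin (m + 1), (W (f i.castSucc) * W (f i.succ) / (n * θ))) := by
          apply Finset.sum_le_sum
          intro f hf
          have hinj : Function.Injective f := by
            simp only [hFk, Finset.mem_filter] at hf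
            exact hf.2.1
          exact path_prob θ hnθ W hW P X hsymm hdist hindep (m + 1) f hinj
        refine h1.trans ?_
        rw [← ENNReal.ofReal_sum_of_nonneg (fun f _ => Finset.prod_nonneg fun i _ =>
          div_nonneg (mul_nonneg (hW _).le (hW _).le) hnθ.le)]
        apply ENNReal.ofReal_le_ofReal
        have := comb_bound θ hnθ W hW 𝒱 u m
        calc ∑ f ∈ Fk (m + 1), ∏ i : Fin (m + 1), (W (f i.castSucc) * W (f i.succ) / (n * θ))
            ≤ (∑ v, Set.indicator 𝒱 (fun x => W x ^ (1:ℝ)) v)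
              * ((∑ x, W x ^ (2:ℝ)) / (n * θ)) ^ m * (W u / (n * θ)) := this
          _ = wnorm W 1 𝒱 * Gam n θ W 2 ^ ((m + 1) - 1) * (W u / (n * θ)) := by
              rfl
      have hP3 : P (Eu u) ≤ ENNReal.ofReal
          (wnorm W 1 𝒱 * (∑ k ∈ Finset.Icc 1 ℓ, Gam n θ W 2 ^ (k - 1)) * (W u / (n * θ))) := by
        refine hP1.trans ?_
        calc ∑ k ∈ Finset.Icc 1 ℓ, ∑ f ∈ Fk k, P (E k f)
            ≤ ∑ k ∈ Finset.Icc 1 ℓ, ENNReal.ofReal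
              (wnorm W 1 𝒱 * Gam n θ W 2 ^ (k - 1) * (W u / (n * θ))) :=
              Finset.sum_le_sum hP2
          _ = ENNReal.ofReal (∑ k ∈ Finset.Icc 1 ℓ,
              wnorm W 1 𝒱 * Gam n θ W 2 ^ (k - 1) * (W u / (n * θ))) := by
              rw [← ENNReal.ofReal_sum_of_nonneg]
              intro k _
              exact mul_nonneg (mul_nonneg (hw1 𝒱) (pow_nonneg (hG 2) _))
                (div_nonneg (hW u).le hnθ.le)
          _ = ENNReal.ofReal (wnorm W 1 𝒱 * (∑ k ∈ Finset.Icc 1 ℓ, Gam n θ W 2 ^ (k - 1))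
              * (W u / (n * θ))) := by
              congr 1
              rw [Finset.mul_sum, Finset.sum_mul]
      refine ENNReal.toReal_le_of_le_ofReal ?_ hP3
      exact mul_nonneg (mul_nonneg (hw1 𝒱) (Finset.sum_nonneg fun k _ =>
        pow_nonneg (hG 2) _)) (div_nonneg (hW u).le hnθ.le)
    -- sum up
    set S := ∑ k ∈ Finset.Icc 1 ℓ, Gam n θ W 2 ^ (k - 1) with hS
    have hSnn : 0 ≤ S := Finset.sum_nonneg fun k _ => pow_nonneg (hG 2) _
    have hsum : ∑ u, (P (Eu u)).toReal * (W u ^ p)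
        ≤ ∑ u, (Set.indicator 𝒱 (fun x => W x ^ p) u
            + wnorm W 1 𝒱 * S * (W u / (n * θ)) * (W u ^ p)) := by
      apply Finset.sum_le_sum
      intro u _
      have hWp : 0 ≤ W u ^ p := Real.rpow_nonneg (hW u).le p
      by_cases hu : u ∈ 𝒱
      · have h1 : (P (Eu u)).toReal ≤ 1 := by
          rw [← ENNReal.toReal_one]
          exact ENNReal.toReal_mono (by simp) prob_le_one
        have h2 : (P (Eu u)).toReal * (W u ^ p) ≤ W u ^ p :=
          le_trans (mul_le_mul_of_nonneg_right h1 hWp) (by simp)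
        rw [Set.indicator_of_mem hu]
        have h3 : 0 ≤ wnorm W 1 𝒱 * S * (W u / (n * θ)) * (W u ^ p) :=
          mul_nonneg (mul_nonneg (mul_nonneg (hw1 𝒱) hSnn)
            (div_nonneg (hW u).le hnθ.le)) hWp
        linarith
      · rw [Set.indicator_of_notMem hu]
        have := mul_le_mul_of_nonneg_right (hub u hu) hWp
        linarith
    calc ∑ u, (P (Eu u)).toReal * (W u ^ p)
        ≤ ∑ u, (Set.indicator 𝒱 (fun x => W x ^ p) u
            + wnorm W 1 𝒱 * S * (W u / (n * θ)) * (W u ^ p)) := hsum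
      _ = wnorm W p 𝒱 + wnorm W 1 𝒱 * S * Gam n θ W (p + 1) := by
          rw [Finset.sum_add_distrib]
          congr 1
          have : ∀ u : Fin n, wnorm W 1 𝒱 * S * (W u / (n * θ)) * (W u ^ p)
              = wnorm W 1 𝒱 * S * (W u ^ (p + 1) / (n * θ)) := by
            intro u
            rw [Real.rpow_add_one (ne_of_gt (hW u)) p]
            ring
          rw [Finset.sum_congr rfl (fun u _ => this u), ← Finset.mul_sum, ← Finset.sum_div]
          rfl
      _ ≤ wnorm W p 𝒱 + wnorm W 1 𝒱 * Gam n θ W (p + 1) * (Gam n θ W 2 + 1) ^ (ℓ - 1) := by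
          have hSle : S ≤ (Gam n θ W 2 + 1) ^ (ℓ - 1) := by
            rw [hS, sum_Icc_pow]
            obtain ⟨t, rfl⟩ : ∃ t, ℓ = t + 1 := ⟨ℓ - 1, by omega⟩
            simpa using geom_bound (Gam n θ W 2) (hG 2) t
          have h2 : wnorm W 1 𝒱 * S * Gam n θ W (p + 1)
              ≤ wnorm W 1 𝒱 * Gam n θ W (p + 1) * (Gam n θ W 2 + 1) ^ (ℓ - 1) := by
            calc wnorm W 1 𝒱 * S * Gam n θ W (p + 1)
                = wnorm W 1 𝒱 * Gam n θ W (p + 1) * S := by ring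
              _ ≤ wnorm W 1 𝒱 * Gam n θ W (p + 1) * (Gam n θ W 2 + 1) ^ (ℓ - 1) := by
                  apply mul_le_mul_of_nonneg_left hSle
                  exact mul_nonneg (hw1 𝒱) (hG (p + 1))
          linarith
  refine ⟨main, ?_⟩
  intro ℓ 𝒱
  cases ℓ with
  | zero =>
    have hset : ∀ ω : Ω, (⋃ v ∈ 𝒱, nbhd (fun a b => X a b ω = true) 0 v) = 𝒱 := by
      intro ω
      have : ∀ v : Fin n, nbhd (fun a b => X a b ω = true) 0 v = {v} := fun v => rfl
      simp only [this]
      exact Set.biUnion_of_singleton 𝒱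
    simp only [hset, pow_zero, mul_one]
    rw [integral_const]
    simp
  | succ t =>
    have h1 := main 1 (by norm_num) (t + 1) (by omega) 𝒱
    have h2 : Gam n θ W (1 + 1) = Gam n θ W 2 := by norm_num
    rw [h2] at h1
    simp only [Nat.add_sub_cancel] at h1
    refine h1.trans ?_
    have hpow : (1:ℝ) ≤ (Gam n θ W 2 + 1) ^ t :=
      one_le_pow₀ (by linarith [hG 2])
    have hwn := hw1 𝒱
    rw [pow_succ]
    nlinarith [hG 2]
end
end

section
/- For every integer ℓ ≥ 1 and every pair of disjoint vertex sets 𝒰, 𝒱 ⊆ V_n, the probability that there exists a path of length exactly ℓ in G_n joining some vertex of 𝒰 to some vertex of 𝒱 is at most (‖𝒰‖·‖𝒱‖/(n·θ))·Γ_{2,n}^{ℓ−1}. -/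
open MeasureTheory ProbabilityTheory Real
open scoped ENNReal

noncomputable section
open Classical

/-- Key combinatorial identity: the product of edge weights along a sequence equals the
product of vertex weights with interior vertices squared. -/
lemma edge_prod_eq {n ℓ : ℕ} (W : Fin n → ℝ) (hW : ∀ v, 0 < W v)
    (f : Fin (ℓ + 1) → Fin n) (h0l : (0 : Fin (ℓ + 1)) ≠ Fin.last ℓ) :
    W (f 0) * W (f (Fin.last ℓ)) *
      ∏ j ∈ (Finset.univ.erase (0 : Fin (ℓ + 1))).erase (Fin.last ℓ), (W (f j)) ^ 2
      = ∏ i : Fin ℓ, (W (f i.castSucc) * W (f i.succ)) := by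
  have hQ1 : (∏ i : Fin ℓ, W (f i.castSucc)) * W (f (Fin.last ℓ))
      = ∏ j : Fin (ℓ + 1), W (f j) := (Fin.prod_univ_castSucc fun j => W (f j)).symm
  have hQ2 : W (f 0) * ∏ i : Fin ℓ, W (f i.succ)
      = ∏ j : Fin (ℓ + 1), W (f j) := (Fin.prod_univ_succ fun j => W (f j)).symm
  have hlast_mem : Fin.last ℓ ∈ Finset.univ.erase (0 : Fin (ℓ + 1)) :=
    Finset.mem_erase.2 ⟨h0l.symm, Finset.mem_univ _⟩
  have hsq : (W (f 0)) ^ 2 * ((W (f (Fin.last ℓ))) ^ 2 *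
      ∏ j ∈ (Finset.univ.erase (0 : Fin (ℓ + 1))).erase (Fin.last ℓ), (W (f j)) ^ 2)
      = (∏ j : Fin (ℓ + 1), W (f j)) ^ 2 := by
    rw [← Finset.prod_pow, ← Finset.mul_prod_erase Finset.univ
        (fun j => (W (f j)) ^ 2) (Finset.mem_univ (0 : Fin (ℓ + 1))),
      ← Finset.mul_prod_erase _ (fun j => (W (f j)) ^ 2) hlast_mem]
  have hne : W (f 0) * W (f (Fin.last ℓ)) ≠ 0 :=
    ne_of_gt (mul_pos (hW _) (hW _))
  apply mul_left_cancel₀ hne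
  rw [Finset.prod_mul_distrib]
  calc W (f 0) * W (f (Fin.last ℓ)) * (W (f 0) * W (f (Fin.last ℓ)) *
        ∏ j ∈ (Finset.univ.erase (0 : Fin (ℓ + 1))).erase (Fin.last ℓ), (W (f j)) ^ 2)
      = (W (f 0)) ^ 2 * ((W (f (Fin.last ℓ))) ^ 2 *
        ∏ j ∈ (Finset.univ.erase (0 : Fin (ℓ + 1))).erase (Fin.last ℓ), (W (f j)) ^ 2) := by
        ring
    _ = (∏ j : Fin (ℓ + 1), W (f j)) ^ 2 := hsq
    _ = ((∏ i : Fin ℓ, W (f i.castSucc)) * W (f (Fin.last ℓ))) *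
        (W (f 0) * ∏ i : Fin ℓ, W (f i.succ)) := by rw [hQ1, hQ2]; ring
    _ = W (f 0) * W (f (Fin.last ℓ)) *
        ((∏ i : Fin ℓ, W (f i.castSucc)) * ∏ i : Fin ℓ, W (f i.succ)) := by ring

theorem stmt6
    (n : ℕ) (hn : 1 ≤ n) (θ : ℝ) (hθ : 0 < θ)
    (W : Fin n → ℝ) (hW : ∀ v, 0 < W v)
    {Ω : Type} [MeasurableSpace Ω] (P : Measure Ω) [IsProbabilityMeasure P]
    (X : Fin n → Fin n → Ω → Bool)
    (hmeas : ∀ u v, Measurable (X u v))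
    (hsymm : ∀ u v, X u v = X v u)
    (hdiag : ∀ v, X v v = fun _ => false)
    (hdist : ∀ u v, u ≠ v →
      P {ω | X u v ω = true} = ENNReal.ofReal (min (W u * W v / (n * θ)) 1))
    (hindep : iIndepFun
      (fun e : {p : Fin n × Fin n // p.1 < p.2} => X e.1.1 e.1.2) P) :
    ∀ ℓ : ℕ, 1 ≤ ℓ → ∀ 𝒰 𝒱 : Set (Fin n), Disjoint 𝒰 𝒱 →
      P {ω | ∃ f : Fin (ℓ + 1) → Fin n, IsPathOn (fun a b => X a b ω = true) ℓ f ∧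
          f 0 ∈ 𝒰 ∧ f (Fin.last ℓ) ∈ 𝒱}
        ≤ ENNReal.ofReal
            (wnorm W 1 𝒰 * wnorm W 1 𝒱 / (n * θ) * Gam n θ W 2 ^ (ℓ - 1)) := by
  intro ℓ hℓ 𝒰 𝒱 _hdisj
  have hn0 : (0 : ℝ) < n := by exact_mod_cast hn
  have hnθ : (0 : ℝ) < n * θ := mul_pos hn0 hθ
  have h0l : (0 : Fin (ℓ + 1)) ≠ Fin.last ℓ := by
    intro h
    have := congrArg Fin.val h
    simp [Fin.last] at this
    omega
  -- vertex weight functions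
  set c : Fin (ℓ + 1) → Fin n → ℝ := fun j v =>
    if j = 0 then 𝒰.indicator W v else if j = Fin.last ℓ then 𝒱.indicator W v
    else (W v) ^ 2 with hc
  have hc_nonneg : ∀ j v, 0 ≤ c j v := by
    intro j v
    simp only [hc]
    split_ifs
    · exact Set.indicator_nonneg (fun u _ => (hW u).le) v
    · exact Set.indicator_nonneg (fun u _ => (hW u).le) v
    · positivity
  set t : (Fin (ℓ + 1) → Fin n) → ℝ := fun f => ((n * θ) ^ ℓ)⁻¹ * ∏ j, c j (f j) with htdef
  have ht_nonneg : ∀ f, 0 ≤ t f := by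
    intro f
    apply mul_nonneg (by positivity)
    exact Finset.prod_nonneg fun j _ => hc_nonneg j (f j)
  -- the events
  set A : (Fin (ℓ + 1) → Fin n) → Set Ω := fun f =>
    {ω | IsPathOn (fun a b => X a b ω = true) ℓ f ∧ f 0 ∈ 𝒰 ∧ f (Fin.last ℓ) ∈ 𝒱} with hA
  have hUnion : {ω | ∃ f : Fin (ℓ + 1) → Fin n,
      IsPathOn (fun a b => X a b ω = true) ℓ f ∧ f 0 ∈ 𝒰 ∧ f (Fin.last ℓ) ∈ 𝒱}
      = ⋃ f, A f := by
    ext ω; simp [hA]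
  -- per-path bound
  have hbound : ∀ f, P (A f) ≤ ENNReal.ofReal (t f) := by
    intro f
    by_cases hgood : Function.Injective f ∧ f 0 ∈ 𝒰 ∧ f (Fin.last ℓ) ∈ 𝒱
    · obtain ⟨hinj, hU, hV⟩ := hgood
      have hlast_mem : Fin.last ℓ ∈ Finset.univ.erase (0 : Fin (ℓ + 1)) :=
        Finset.mem_erase.2 ⟨h0l.symm, Finset.mem_univ _⟩
      have hne : ∀ i : Fin ℓ, f i.castSucc ≠ f i.succ := by
        intro i h
        exact absurd (hinj h) (Fin.castSucc_lt_succ : i.castSucc < i.succ).ne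
      set E : Fin ℓ → {p : Fin n × Fin n // p.1 < p.2} := fun i =>
        if h : f i.castSucc < f i.succ then ⟨(f i.castSucc, f i.succ), h⟩
        else ⟨(f i.succ, f i.castSucc), lt_of_le_of_ne (not_lt.mp h) (hne i).symm⟩ with hE
      have hEval : ∀ i, (X (E i).1.1 (E i).1.2) ⁻¹' {true}
          = {ω | X (f i.castSucc) (f i.succ) ω = true} := by
        intro i
        simp only [hE]
        split_ifs with h
        · rfl
        · ext ω
          simp [hsymm (f i.succ) (f i.castSucc)]
      have hEinj : Function.Injective E := by
        intro i j hij
        have hval : ((E i : {p : Fin n × Fin n // p.1 < p.2}) : Fin n × Fin n) = (E j : {p : Fin n × Fin n // p.1 < p.2}) :=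
          congrArg Subtype.val hij
        simp only [hE] at hval
        split_ifs at hval <;>
        · rw [Prod.ext_iff] at hval
          obtain ⟨ha, hb⟩ := hval
          have h1 := congrArg Fin.val (hinj ha)
          have h2 := congrArg Fin.val (hinj hb)
          apply Fin.ext
          simp only [Fin.coe_castSucc, Fin.val_succ] at h1 h2
          omega
      have hsub : A f ⊆ ⋂ i : Fin ℓ, (X (E i).1.1 (E i).1.2) ⁻¹' {true} := by
        intro ω hω
        rw [Set.mem_iInter]
        intro i
        rw [hEval i]
        exact hω.1.2 i
      have hInter : P (⋂ i : Fin ℓ, (X (E i).1.1 (E i).1.2) ⁻¹' {true})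
          = ∏ i : Fin ℓ, P ((X (E i).1.1 (E i).1.2) ⁻¹' {true}) := by
        have hre : (⋂ i : Fin ℓ, (X (E i).1.1 (E i).1.2) ⁻¹' {true})
            = ⋂ e ∈ Finset.image E Finset.univ,
                (X e.1.1 e.1.2 : Ω → Bool) ⁻¹' {true} := by
          ext ω
          simp only [Set.mem_iInter, Finset.mem_image, Finset.mem_univ, true_and]
          constructor
          · rintro h e ⟨i, rfl⟩
            exact h i
          · intro h i
            exact h (E i) ⟨i, rfl⟩
        rw [hre,
          hindep.meas_biInter fun e _ => ⟨{true}, measurableSet_singleton true, rfl⟩,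
          Finset.prod_image fun i _ j _ h => hEinj h]
      have hedge : ∀ i : Fin ℓ, P ((X (E i).1.1 (E i).1.2) ⁻¹' {true})
          ≤ ENNReal.ofReal (W (f i.castSucc) * W (f i.succ) / (n * θ)) := by
        intro i
        have hlt := (E i).2
        have heq : P ((X (E i).1.1 (E i).1.2) ⁻¹' {true})
            = ENNReal.ofReal (min (W (E i).1.1 * W (E i).1.2 / (n * θ)) 1) := by
          rw [show (X (E i).1.1 (E i).1.2) ⁻¹' {true}
              = {ω | X (E i).1.1 (E i).1.2 ω = true} from by ext ω; simp]
          exact hdist _ _ (ne_of_lt hlt)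
        rw [heq]
        apply ENNReal.ofReal_le_ofReal
        refine le_trans (min_le_left _ _) ?_
        simp only [hE]
        split_ifs with h
        · exact le_refl _
        · rw [mul_comm]
      have hprod_t : ∏ i : Fin ℓ, (W (f i.castSucc) * W (f i.succ) / (n * θ)) = t f := by
        have hcprod : ∏ j, c j (f j)
            = W (f 0) * (W (f (Fin.last ℓ)) *
              ∏ j ∈ (Finset.univ.erase (0 : Fin (ℓ + 1))).erase (Fin.last ℓ),
                (W (f j)) ^ 2) := by
          rw [← Finset.mul_prod_erase Finset.univ (fun j => c j (f j))
              (Finset.mem_univ (0 : Fin (ℓ + 1))),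
            ← Finset.mul_prod_erase _ (fun j => c j (f j)) hlast_mem]
          have hc0 : c 0 (f 0) = W (f 0) := by
            simp [hc, Set.indicator_of_mem hU]
          have hcl : c (Fin.last ℓ) (f (Fin.last ℓ)) = W (f (Fin.last ℓ)) := by
            have hne' : Fin.last ℓ ≠ 0 := Ne.symm h0l
            simp [hc, hne', Set.indicator_of_mem hV]
          rw [hc0, hcl,
            Finset.prod_congr rfl (g := fun j => (W (f j)) ^ 2) fun j hj => ?_]
          obtain ⟨hjl, hj0⟩ := Finset.mem_erase.1 hj
          obtain ⟨hj0', -⟩ := Finset.mem_erase.1 hj0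
          simp [hc, hj0', hjl]
        rw [Finset.prod_div_distrib, Finset.prod_const, Finset.card_univ,
          Fintype.card_fin, htdef]
        simp only
        rw [hcprod, ← edge_prod_eq W hW f h0l, div_eq_mul_inv, mul_comm]
        ring
      calc P (A f) ≤ P (⋂ i : Fin ℓ, (X (E i).1.1 (E i).1.2) ⁻¹' {true}) :=
            measure_mono hsub
        _ = ∏ i : Fin ℓ, P ((X (E i).1.1 (E i).1.2) ⁻¹' {true}) := hInter
        _ ≤ ∏ i : Fin ℓ, ENNReal.ofReal (W (f i.castSucc) * W (f i.succ) / (n * θ)) :=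
            Finset.prod_le_prod' fun i _ => hedge i
        _ = ENNReal.ofReal (∏ i : Fin ℓ, (W (f i.castSucc) * W (f i.succ) / (n * θ))) :=
            (ENNReal.ofReal_prod_of_nonneg fun i _ => div_nonneg (mul_nonneg (hW _).le (hW _).le) hnθ.le).symm
        _ = ENNReal.ofReal (t f) := by rw [hprod_t]
    · have : A f = ∅ := by
        ext ω
        simp only [hA, Set.mem_setOf_eq, Set.mem_empty_iff_false, iff_false, IsPathOn]
        tauto
      rw [this]
      simp
  -- the sum identity
  have hsum : ∑ f : Fin (ℓ + 1) → Fin n, t f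
      = wnorm W 1 𝒰 * wnorm W 1 𝒱 / (n * θ) * Gam n θ W 2 ^ (ℓ - 1) := by
    have hlast_mem : Fin.last ℓ ∈ Finset.univ.erase (0 : Fin (ℓ + 1)) :=
      Finset.mem_erase.2 ⟨h0l.symm, Finset.mem_univ _⟩
    have hswap : ∑ f : Fin (ℓ + 1) → Fin n, ∏ j, c j (f j) = ∏ j, ∑ v, c j v :=
      (Fintype.prod_sum fun j v => c j v).symm
    have hcard : ((Finset.univ.erase (0 : Fin (ℓ + 1))).erase (Fin.last ℓ)).card = ℓ - 1 := by
      rw [Finset.card_erase_of_mem hlast_mem,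
        Finset.card_erase_of_mem (Finset.mem_univ _), Finset.card_univ]
      simp
    have h1 : ∑ v, c 0 v = ∑ v, 𝒰.indicator W v := by simp [hc]
    have h2 : ∑ v, c (Fin.last ℓ) v = ∑ v, 𝒱.indicator W v := by
      have hne : Fin.last ℓ ≠ 0 := Ne.symm h0l
      simp [hc, hne]
    have h3 : ∏ j ∈ (Finset.univ.erase (0 : Fin (ℓ + 1))).erase (Fin.last ℓ), (∑ v, c j v)
        = (∑ v, (W v) ^ 2) ^ (ℓ - 1) := by
      rw [Finset.prod_congr rfl (g := fun _ => ∑ v, (W v) ^ 2) fun j hj => ?_,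
        Finset.prod_const, hcard]
      obtain ⟨hjl, hj0⟩ := Finset.mem_erase.1 hj
      obtain ⟨hj0', -⟩ := Finset.mem_erase.1 hj0
      simp [hc, hj0', hjl]
    have hprod : ∏ j : Fin (ℓ + 1), ∑ v, c j v
        = (∑ v, 𝒰.indicator W v) * ((∑ v, 𝒱.indicator W v) * (∑ v, (W v) ^ 2) ^ (ℓ - 1)) := by
      rw [← Finset.mul_prod_erase Finset.univ (fun j => ∑ v, c j v)
          (Finset.mem_univ (0 : Fin (ℓ + 1))),
        ← Finset.mul_prod_erase _ (fun j => ∑ v, c j v) hlast_mem, h1, h2, h3]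
    have hw1 : wnorm W 1 𝒰 = ∑ v, 𝒰.indicator W v := by
      simp [wnorm, Real.rpow_one]
    have hw2 : wnorm W 1 𝒱 = ∑ v, 𝒱.indicator W v := by
      simp [wnorm, Real.rpow_one]
    have hG : Gam n θ W 2 = (∑ v, (W v) ^ 2) / (n * θ) := by
      simp [Gam, Real.rpow_two]
    obtain ⟨m, rfl⟩ : ∃ m, ℓ = m + 1 := ⟨ℓ - 1, by omega⟩
    calc ∑ f : Fin (m + 1 + 1) → Fin n, t f
        = ((n * θ) ^ (m + 1))⁻¹ * ∑ f : Fin (m + 1 + 1) → Fin n, ∏ j, c j (f j) := by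
          rw [Finset.mul_sum]
      _ = ((n * θ) ^ (m + 1))⁻¹ * ((∑ v, 𝒰.indicator W v) *
            ((∑ v, 𝒱.indicator W v) * (∑ v, (W v) ^ 2) ^ m)) := by
          rw [hswap, hprod]; norm_num
      _ = wnorm W 1 𝒰 * wnorm W 1 𝒱 / (n * θ) * Gam n θ W 2 ^ (m + 1 - 1) := by
          rw [hw1, hw2, hG]
          have hm : m + 1 - 1 = m := by omega
          rw [hm, div_pow]
          field_simp
          ring
  calc P {ω | ∃ f : Fin (ℓ + 1) → Fin n,
        IsPathOn (fun a b => X a b ω = true) ℓ f ∧ f 0 ∈ 𝒰 ∧ f (Fin.last ℓ) ∈ 𝒱}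
      = P (⋃ f, A f) := by rw [hUnion]
    _ ≤ ∑' f, P (A f) := measure_iUnion_le _
    _ = ∑ f, P (A f) := tsum_fintype _
    _ ≤ ∑ f, ENNReal.ofReal (t f) := Finset.sum_le_sum fun f _ => hbound f
    _ = ENNReal.ofReal (∑ f, t f) :=
        (ENNReal.ofReal_sum_of_nonneg fun f _ => ht_nonneg f).symm
    _ = _ := by rw [hsum]
end
end

section
/- For every integer ℓ ≥ 1 and all distinct vertices u, v ∈ V_n, the probability that u lies at graph distance at most ℓ from v in G_n satisfies P(u ∈ S_ℓ(v)) ≤ (W_u·W_v/(n·θ))·(Γ_{2,n}+1)^{ℓ−1}. -/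
open MeasureTheory ProbabilityTheory Real
open scoped ENNReal

noncomputable section
open Classical

lemma exists_path {n : ℕ} (A : Fin n → Fin n → Prop) :
    ∀ ℓ : ℕ, ∀ v u : Fin n, u ∈ nbhd A ℓ v → u ≠ v →
      ∃ k : ℕ, k + 1 ≤ ℓ ∧ ∃ f : Fin (k + 2) → Fin n,
        IsPathOn A (k + 1) f ∧ f 0 = v ∧ f (Fin.last (k + 1)) = u := by
  intro ℓ
  induction ℓ with
  | zero =>
    intro v u hu hne
    simp only [nbhd, Set.mem_singleton_iff] at hu
    exact absurd hu hne
  | succ ℓ ih =>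
    intro v u hu hne
    rcases hu with hu | ⟨w, hw, hA⟩
    · obtain ⟨k, hk, f, hf⟩ := ih v u hu hne
      exact ⟨k, hk.trans (Nat.le_succ _), f, hf⟩
    · by_cases hwv : w = v
      · subst hwv
        refine ⟨0, by omega, Fin.cons w (fun _ => u), ⟨?_, ?_⟩, rfl, rfl⟩
        · intro a b hab
          match a, b with
          | 0, 0 => rfl
          | 0, 1 => simp at hab; exact absurd hab.symm hne
          | 1, 0 => simp at hab; exact absurd hab hne
          | 1, 1 => rfl
        · intro i
          have : i = 0 := by omega
          subst this
          simpa using hA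
      · obtain ⟨k, hk, f, ⟨hinj, hedge⟩, h0, hlast⟩ := ih v w hw hwv
        by_cases hur : ∃ j : Fin (k + 2), f j = u
        · obtain ⟨j, hj⟩ := hur
          have hj0 : j ≠ 0 := by rintro rfl; exact hne (hj ▸ h0 ▸ rfl)
          obtain ⟨j', rfl⟩ := Fin.exists_succ_eq.2 hj0
          have hle : j'.val + 2 ≤ k + 2 := by omega
          have hle' : j'.val + 1 ≤ k + 1 := by omega
          refine ⟨j'.val, by omega, fun i => f (Fin.castLE hle i), ⟨?_, ?_⟩, ?_, ?_⟩
          · intro a b hab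
            exact Fin.castLE_injective hle (hinj hab)
          · intro i
            dsimp only
            have h1 : Fin.castLE hle i.castSucc = (Fin.castLE hle' i).castSucc := rfl
            have h2 : Fin.castLE hle i.succ = (Fin.castLE hle' i).succ := rfl
            rw [h1, h2]
            exact hedge _
          · dsimp only
            have : Fin.castLE hle 0 = 0 := rfl
            rw [this, h0]
          · dsimp only
            have : Fin.castLE hle (Fin.last (j'.val + 1)) = j'.succ := by
              ext; simp
            rw [this, hj]
        · -- extend with snoc
          refine ⟨k + 1, by omega, Fin.snoc f u, ⟨?_, ?_⟩, ?_, by simp⟩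
          · intro a b hab
            rcases eq_or_ne a (Fin.last (k + 2)) with rfl | ha
            · rcases eq_or_ne b (Fin.last (k + 2)) with rfl | hb
              · rfl
              · obtain ⟨b', rfl⟩ := Fin.exists_castSucc_eq.2 hb
                simp only [Fin.snoc_last, Fin.snoc_castSucc] at hab
                exact absurd ⟨b', hab.symm⟩ hur
            · obtain ⟨a', rfl⟩ := Fin.exists_castSucc_eq.2 ha
              rcases eq_or_ne b (Fin.last (k + 2)) with rfl | hb
              · simp only [Fin.snoc_last, Fin.snoc_castSucc] at hab
                exact absurd ⟨a', hab⟩ hur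
              · obtain ⟨b', rfl⟩ := Fin.exists_castSucc_eq.2 hb
                simp only [Fin.snoc_castSucc] at hab
                exact congrArg _ (hinj hab)
          · intro i
            rcases eq_or_ne i (Fin.last (k + 1)) with rfl | hi
            · have h1 : (Fin.last (k + 1)).castSucc = Fin.castSucc (Fin.last (k + 1)) := rfl
              have h2 : (Fin.last (k + 1)).succ = Fin.last (k + 2) := Fin.succ_last _
              rw [h2, Fin.snoc_last, Fin.snoc_castSucc, hlast]
              exact hA
            · obtain ⟨i', rfl⟩ := Fin.exists_castSucc_eq.2 hi
              have h1 : (Fin.castSucc i').castSucc = Fin.castSucc i'.castSucc := rfl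
              have h2 : (Fin.castSucc i').succ = Fin.castSucc i'.succ := by
                ext; simp
              rw [h1, h2, Fin.snoc_castSucc, Fin.snoc_castSucc]
              exact hedge i'
          · have : (0 : Fin (k + 3)) = Fin.castSucc 0 := rfl
            rw [this, Fin.snoc_castSucc, h0]

lemma sum_prod_pow {α : Type*} [Fintype α] (h : α → ℝ) :
    ∀ k : ℕ, ∑ g : Fin k → α, ∏ j, h (g j) = (∑ w, h w) ^ k := by
  intro k
  induction k with
  | zero => simp
  | succ k ih =>
    rw [← Fintype.sum_equiv (Fin.consEquiv (fun _ : Fin (k+1) => α))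
      (fun p => ∏ j, h ((Fin.consEquiv (fun _ : Fin (k+1) => α)) p j)) (fun g => ∏ j, h (g j)) (fun p => rfl)]
    rw [Fintype.sum_prod_type]
    have : ∀ (a : α) (g : Fin k → α),
        ∏ j : Fin (k+1), h ((Fin.consEquiv (fun _ : Fin (k+1) => α)) (a, g) j) = h a * ∏ j, h (g j) := by
      intro a g
      rw [Fin.prod_univ_succ]
      simp [Fin.consEquiv]
    simp_rw [this, ← Finset.mul_sum, ← Finset.sum_mul, ih]
    ring

lemma prob_path_le
    (n : ℕ) (θ : ℝ) (W : Fin n → ℝ) (hW : ∀ v, 0 < W v) (hc : 0 < (n : ℝ) * θ)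
    {Ω : Type} [MeasurableSpace Ω] (P : Measure Ω) [IsProbabilityMeasure P]
    (X : Fin n → Fin n → Ω → Bool)
    (hsymm : ∀ u v, X u v = X v u)
    (hdist : ∀ u v, u ≠ v →
      P {ω | X u v ω = true} = ENNReal.ofReal (min (W u * W v / (n * θ)) 1))
    (hindep : iIndepFun
      (fun e : {p : Fin n × Fin n // p.1 < p.2} => X e.1.1 e.1.2) P)
    (k : ℕ) (f : Fin (k + 2) → Fin n) (hinj : Function.Injective f) :
    P (⋂ i : Fin (k + 1), {ω | X (f i.castSucc) (f i.succ) ω = true})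
      ≤ ENNReal.ofReal (∏ i : Fin (k + 1), (W (f i.castSucc) * W (f i.succ) / ((n : ℝ) * θ))) := by
  have hne : ∀ i : Fin (k + 1), f i.castSucc ≠ f i.succ := by
    intro i h
    exact absurd (hinj h) (Fin.castSucc_lt_succ (i := i)).ne
  set e : Fin (k + 1) → {p : Fin n × Fin n // p.1 < p.2} := fun i =>
    if h : f i.castSucc < f i.succ then ⟨(f i.castSucc, f i.succ), h⟩
    else ⟨(f i.succ, f i.castSucc), (not_lt.mp h).lt_of_ne (Ne.symm (hne i))⟩ with he
  have hBe : ∀ i : Fin (k + 1),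
      {ω | X (f i.castSucc) (f i.succ) ω = true} = {ω | X (e i).1.1 (e i).1.2 ω = true} := by
    intro i
    rw [he]
    by_cases h : f i.castSucc < f i.succ
    · simp [h]
    · simp only [h, dite_false]
      rw [hsymm]
  have heinj : Function.Injective e := by
    intro i j hij
    rw [he] at hij
    simp only at hij
    split_ifs at hij with h1 h2 h2 <;>
      · have h3 := congrArg (fun p => p.1.1) hij
        have h4 := congrArg (fun p => p.1.2) hij
        simp only at h3 h4
        first
          | · have := hinj h3; have := hinj h4
              ext
              omega
          | · have e3 := hinj h3; have e4 := hinj h4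
              have := congrArg Fin.val e3
              have := congrArg Fin.val e4
              simp [Fin.val_succ] at *
              omega
  have hmeasB : ∀ p : {p : Fin n × Fin n // p.1 < p.2},
      MeasurableSet[(inferInstance : MeasurableSpace Bool).comap (X p.1.1 p.1.2)]
        {ω | X p.1.1 p.1.2 ω = true} := by
    intro p
    exact ⟨{true}, trivial, rfl⟩
  have hinter : (⋂ i : Fin (k + 1), {ω | X (f i.castSucc) (f i.succ) ω = true})
      = ⋂ p ∈ Finset.image e Finset.univ, {ω | X p.1.1 p.1.2 ω = true} := by
    ext ω
    simp only [Set.mem_iInter, Finset.mem_image, Finset.mem_univ, true_and]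
    constructor
    · rintro hω p ⟨i, rfl⟩
      have := hω i
      rwa [hBe i] at this
    · intro hω i
      rw [hBe i]
      exact hω _ ⟨i, rfl⟩
  rw [hinter]
  rw [hindep.meas_biInter (fun p _ => hmeasB p)]
  rw [Finset.prod_image (fun i _ j _ h => heinj h)]
  have hterm : ∀ i : Fin (k + 1),
      P {ω | X (e i).1.1 (e i).1.2 ω = true}
        ≤ ENNReal.ofReal (W (f i.castSucc) * W (f i.succ) / ((n : ℝ) * θ)) := by
    intro i
    have hne2 : (e i).1.1 ≠ (e i).1.2 := (e i).2.ne
    rw [hdist _ _ hne2]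
    apply ENNReal.ofReal_le_ofReal
    refine (min_le_left _ _).trans ?_
    rw [he]
    by_cases h : f i.castSucc < f i.succ
    · simp [h]
    · simp only [h, dite_false]
      rw [mul_comm]
  calc ∏ i : Fin (k + 1), P {ω | X (e i).1.1 (e i).1.2 ω = true}
      ≤ ∏ i : Fin (k + 1), ENNReal.ofReal (W (f i.castSucc) * W (f i.succ) / ((n : ℝ) * θ)) :=
        Finset.prod_le_prod' (fun i _ => hterm i)
    _ = ENNReal.ofReal (∏ i : Fin (k + 1), (W (f i.castSucc) * W (f i.succ) / ((n : ℝ) * θ))) := by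
        rw [ENNReal.ofReal_prod_of_nonneg]
        intro i _
        exact div_nonneg (mul_nonneg (hW _).le (hW _).le) hc.le

lemma cons_snoc_mid {α : Type*} {k : ℕ} (v u : α) (g : Fin k → α) (j : Fin k) :
    (Fin.cons v (Fin.snoc g u) : Fin (k + 2) → α) j.succ.castSucc = g j := by
  have h1 : (j.succ.castSucc : Fin (k + 2)) = (j.castSucc : Fin (k + 1)).succ := by
    ext; simp
  rw [h1, Fin.cons_succ, Fin.snoc_castSucc]

lemma cons_snoc_last {α : Type*} {k : ℕ} (v u : α) (g : Fin k → α) :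
    (Fin.cons v (Fin.snoc g u) : Fin (k + 2) → α) (Fin.last (k + 1)) = u := by
  have h1 : Fin.last (k + 1) = (Fin.last k).succ := (Fin.succ_last k).symm
  rw [h1, Fin.cons_succ, Fin.snoc_last]

lemma cons_snoc_eq {α : Type*} {k : ℕ} (f : Fin (k + 2) → α) :
    (Fin.cons (f 0) (Fin.snoc (fun j : Fin k => f j.succ.castSucc) (f (Fin.last (k + 1))))
      : Fin (k + 2) → α) = f := by
  funext x
  induction x using Fin.cases with
  | zero => rw [Fin.cons_zero]
  | succ x' =>
    rw [Fin.cons_succ]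
    induction x' using Fin.lastCases with
    | last =>
      rw [Fin.snoc_last]
      congr 1
    | cast j =>
      rw [Fin.snoc_castSucc]
      congr 1

lemma sum_endpoint_paths (n k : ℕ) (W : Fin n → ℝ) (c : ℝ) (hc : 0 < c) (v u : Fin n) :
    ∑ f ∈ Finset.univ.filter
        (fun f : Fin (k + 2) → Fin n => f 0 = v ∧ f (Fin.last (k + 1)) = u),
      ∏ i : Fin (k + 1), (W (f i.castSucc) * W (f i.succ) / c)
    = W v * W u / c * ((∑ w, W w ^ 2) / c) ^ k := by
  have step1 : ∑ f ∈ Finset.univ.filter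
        (fun f : Fin (k + 2) → Fin n => f 0 = v ∧ f (Fin.last (k + 1)) = u),
      ∏ i : Fin (k + 1), (W (f i.castSucc) * W (f i.succ) / c)
      = ∑ g : Fin k → Fin n,
          (W v * W u / c) * ∏ j : Fin k, (W (g j) ^ 2 / c) := by
    refine Finset.sum_nbij' (fun f => fun j : Fin k => f j.succ.castSucc)
      (fun g => Fin.cons v (Fin.snoc g u)) (fun f hf => Finset.mem_univ _)
      (fun g hg => ?_) (fun f hf => ?_) (fun g hg => ?_) (fun f hf => ?_)
    · simp only [Finset.mem_filter, Finset.mem_univ, true_and]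
      exact ⟨Fin.cons_zero _ _, cons_snoc_last _ _ _⟩
    · simp only [Finset.mem_filter, Finset.mem_univ, true_and] at hf
      obtain ⟨h0, hlast⟩ := hf
      rw [← h0, ← hlast]
      exact cons_snoc_eq f
    · funext j
      exact cons_snoc_mid _ _ _ _
    · simp only [Finset.mem_filter, Finset.mem_univ, true_and] at hf
      obtain ⟨h0, hlast⟩ := hf
      dsimp only
      have hsplit : ∏ i : Fin (k + 1), (W (f i.castSucc) * W (f i.succ) / c)
          = ((∏ i : Fin (k + 1), W (f i.castSucc)) * ∏ i : Fin (k + 1), W (f i.succ))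
            / c ^ (k + 1) := by
        rw [Finset.prod_div_distrib, Finset.prod_mul_distrib]
        simp [Finset.prod_const]
      have hcs : ∏ i : Fin (k + 1), W (f i.castSucc)
          = W v * ∏ j : Fin k, W (f j.succ.castSucc) := by
        rw [Fin.prod_univ_succ]
        exact congrArg₂ (fun a b => a * b) (congrArg W h0) rfl
      have hsc : ∏ i : Fin (k + 1), W (f i.succ)
          = (∏ j : Fin k, W (f j.succ.castSucc)) * W u := by
        rw [Fin.prod_univ_castSucc]
        exact congrArg₂ (fun a b => a * b) (Finset.prod_congr rfl fun j _ => rfl)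
          (congrArg W hlast)
      have hsq : ∏ j : Fin k, (W (f j.succ.castSucc) ^ 2 / c)
          = (∏ j : Fin k, W (f j.succ.castSucc)) ^ 2 / c ^ k := by
        rw [Finset.prod_div_distrib, Finset.prod_pow]
        simp [Finset.prod_const]
      rw [hsplit, hcs, hsc, hsq]
      field_simp
      ring
  rw [step1, ← Finset.mul_sum, sum_prod_pow (fun w => W w ^ 2 / c) k, ← Finset.sum_div]

lemma geom_sum_le_pow (Γ : ℝ) (hΓ : 0 ≤ Γ) (m : ℕ) :
    ∑ k ∈ Finset.range (m + 1), Γ ^ k ≤ (Γ + 1) ^ m := by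
  rw [add_pow]
  refine Finset.sum_le_sum fun k hk => ?_
  simp only [one_pow, mul_one]
  have h1 : (1 : ℝ) ≤ (m.choose k : ℝ) := by
    have := Nat.choose_pos (Nat.lt_succ_iff.mp (Finset.mem_range.mp hk))
    exact_mod_cast this
  nlinarith [pow_nonneg hΓ k]

theorem stmt8
    (n : ℕ) (hn : 1 ≤ n) (θ : ℝ) (hθ : 0 < θ)
    (W : Fin n → ℝ) (hW : ∀ v, 0 < W v)
    {Ω : Type} [MeasurableSpace Ω] (P : Measure Ω) [IsProbabilityMeasure P]
    (X : Fin n → Fin n → Ω → Bool)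
    (hmeas : ∀ u v, Measurable (X u v))
    (hsymm : ∀ u v, X u v = X v u)
    (hdiag : ∀ v, X v v = fun _ => false)
    (hdist : ∀ u v, u ≠ v →
      P {ω | X u v ω = true} = ENNReal.ofReal (min (W u * W v / (n * θ)) 1))
    (hindep : iIndepFun
      (fun e : {p : Fin n × Fin n // p.1 < p.2} => X e.1.1 e.1.2) P) :
    ∀ ℓ : ℕ, 1 ≤ ℓ → ∀ u v : Fin n, u ≠ v →
      P {ω | u ∈ nbhd (fun a b => X a b ω = true) ℓ v}
        ≤ ENNReal.ofReal (W u * W v / (n * θ) * (Gam n θ W 2 + 1) ^ (ℓ - 1)) := by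
  intro ℓ hℓ u v huv
  have hc : 0 < (n : ℝ) * θ := by
    have h1 : (1 : ℝ) ≤ (n : ℝ) := by exact_mod_cast hn
    nlinarith
  -- the finsets of candidate paths
  set F : (k : ℕ) → Finset (Fin (k + 2) → Fin n) := fun k =>
    Finset.univ.filter (fun f => Function.Injective f ∧ f 0 = v ∧ f (Fin.last (k + 1)) = u)
    with hF
  set G : (k : ℕ) → Finset (Fin (k + 2) → Fin n) := fun k =>
    Finset.univ.filter (fun f => f 0 = v ∧ f (Fin.last (k + 1)) = u) with hG
  set E : (k : ℕ) → (Fin (k + 2) → Fin n) → Set Ω := fun k f =>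
    ⋂ i : Fin (k + 1), {ω | X (f i.castSucc) (f i.succ) ω = true} with hE
  have hsub : {ω | u ∈ nbhd (fun a b => X a b ω = true) ℓ v}
      ⊆ ⋃ k ∈ Finset.range ℓ, ⋃ f ∈ F k, E k f := by
    intro ω hω
    obtain ⟨k, hk, f, ⟨hinj, hedge⟩, h0, hlast⟩ := exists_path _ ℓ v u hω huv
    simp only [Set.mem_iUnion, hE, Set.mem_iInter]
    exact ⟨k, Finset.mem_range.mpr hk,
      f, by simp [hF, hinj, h0, hlast], fun i => hedge i⟩
  have hterm : ∀ k, ∀ f ∈ F k,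
      P (E k f) ≤ ENNReal.ofReal
        (∏ i : Fin (k + 1), (W (f i.castSucc) * W (f i.succ) / ((n : ℝ) * θ))) := by
    intro k f hf
    have hinj : Function.Injective f := by
      simp only [hF, Finset.mem_filter] at hf
      exact hf.2.1
    exact prob_path_le n θ W hW hc P X hsymm hdist hindep k f hinj
  have hnonneg : ∀ (k : ℕ) (f : Fin (k + 2) → Fin n),
      0 ≤ ∏ i : Fin (k + 1), (W (f i.castSucc) * W (f i.succ) / ((n : ℝ) * θ)) :=
    fun k f => Finset.prod_nonneg fun i _ =>
      div_nonneg (mul_nonneg (hW _).le (hW _).le) hc.le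
  have hsumk : ∀ k : ℕ, ∑ f ∈ F k, P (E k f)
      ≤ ENNReal.ofReal (W v * W u / ((n : ℝ) * θ) * ((∑ w, W w ^ 2) / ((n : ℝ) * θ)) ^ k) := by
    intro k
    calc ∑ f ∈ F k, P (E k f)
        ≤ ∑ f ∈ F k, ENNReal.ofReal
            (∏ i : Fin (k + 1), (W (f i.castSucc) * W (f i.succ) / ((n : ℝ) * θ))) :=
          Finset.sum_le_sum (hterm k)
      _ = ENNReal.ofReal (∑ f ∈ F k,
            ∏ i : Fin (k + 1), (W (f i.castSucc) * W (f i.succ) / ((n : ℝ) * θ))) :=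
          (ENNReal.ofReal_sum_of_nonneg (fun f _ => hnonneg k f)).symm
      _ ≤ ENNReal.ofReal (∑ f ∈ G k,
            ∏ i : Fin (k + 1), (W (f i.castSucc) * W (f i.succ) / ((n : ℝ) * θ))) := by
          apply ENNReal.ofReal_le_ofReal
          refine Finset.sum_le_sum_of_subset_of_nonneg ?_ (fun f _ _ => hnonneg k f)
          intro f hf
          simp only [hF, hG, Finset.mem_filter] at hf ⊢
          exact ⟨hf.1, hf.2.2⟩
      _ = ENNReal.ofReal (W v * W u / ((n : ℝ) * θ) * ((∑ w, W w ^ 2) / ((n : ℝ) * θ)) ^ k) := by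
          rw [hG, sum_endpoint_paths n k W ((n : ℝ) * θ) hc v u]
  have hreal : ∑ k ∈ Finset.range ℓ,
      W v * W u / ((n : ℝ) * θ) * ((∑ w, W w ^ 2) / ((n : ℝ) * θ)) ^ k
      ≤ W u * W v / ((n : ℝ) * θ) * (Gam n θ W 2 + 1) ^ (ℓ - 1) := by
    have hGam : Gam n θ W 2 = (∑ w, W w ^ 2) / ((n : ℝ) * θ) := by
      simp only [Gam]
      congr 1
      refine Finset.sum_congr rfl fun w _ => ?_
      rw [show (2 : ℝ) = ((2 : ℕ) : ℝ) by norm_num, Real.rpow_natCast]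
    rw [← Finset.mul_sum, hGam, mul_comm (W v) (W u)]
    apply mul_le_mul_of_nonneg_left _ (div_nonneg (mul_nonneg (hW _).le (hW _).le) hc.le)
    obtain ⟨m, rfl⟩ : ∃ m, ℓ = m + 1 := ⟨ℓ - 1, by omega⟩
    simp only [Nat.add_sub_cancel]
    exact geom_sum_le_pow _ (div_nonneg (Finset.sum_nonneg fun w _ => sq_nonneg _) hc.le) m
  calc P {ω | u ∈ nbhd (fun a b => X a b ω = true) ℓ v}
      ≤ P (⋃ k ∈ Finset.range ℓ, ⋃ f ∈ F k, E k f) := measure_mono hsub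
    _ ≤ ∑ k ∈ Finset.range ℓ, P (⋃ f ∈ F k, E k f) := measure_biUnion_finset_le _ _
    _ ≤ ∑ k ∈ Finset.range ℓ, ∑ f ∈ F k, P (E k f) :=
        Finset.sum_le_sum fun k _ => measure_biUnion_finset_le _ _
    _ ≤ ∑ k ∈ Finset.range ℓ, ENNReal.ofReal
          (W v * W u / ((n : ℝ) * θ) * ((∑ w, W w ^ 2) / ((n : ℝ) * θ)) ^ k) :=
        Finset.sum_le_sum fun k _ => hsumk k
    _ = ENNReal.ofReal (∑ k ∈ Finset.range ℓ,
          W v * W u / ((n : ℝ) * θ) * ((∑ w, W w ^ 2) / ((n : ℝ) * θ)) ^ k) :=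
        (ENNReal.ofReal_sum_of_nonneg (fun k _ =>
          mul_nonneg (div_nonneg (mul_nonneg (hW _).le (hW _).le) hc.le)
            (pow_nonneg (div_nonneg (Finset.sum_nonneg fun w _ => sq_nonneg _) hc.le) k))).symm
    _ ≤ ENNReal.ofReal (W u * W v / ((n : ℝ) * θ) * (Gam n θ W 2 + 1) ^ (ℓ - 1)) :=
        ENNReal.ofReal_le_ofReal hreal
end
end

section
/- For every integer ℓ ≥ 1, every vertex v ∈ V_n and every pair e = {u, u'} of distinct vertices both different from v, the probability that the edge e belongs to B_ℓ(v) (i.e., e is an edge of G_n and lies on some path of length at most ℓ starting at v) satisfies P(e ∈ B_ℓ(v)) ≤ (W_v·(W_u+W_{u'})/(n·θ))·(Γ_{2,n}+1)^{ℓ−1}. -/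
open MeasureTheory ProbabilityTheory Real
open scoped ENNReal

noncomputable section
open Classical

/-- the unordered pair `{a,b}` is an edge of the neighbourhood `B_ℓ(v)`: it lies on a
path of length at most `ℓ` starting at `v`. -/
def edgeInBall {n : ℕ} (A : Fin n → Fin n → Prop) (ℓ : ℕ) (v a b : Fin n) : Prop :=
  ∃ k, k ≤ ℓ ∧ ∃ f : Fin (k + 1) → Fin n, IsPathOn A k f ∧ f 0 = v ∧
    ∃ i : Fin k, (f i.castSucc = a ∧ f i.succ = b) ∨ (f i.castSucc = b ∧ f i.succ = a)

namespace Stmt9Aux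

variable {n : ℕ}

/-- weight of a path -/
def pathWt (c : Fin n → ℝ) (m : ℕ) (g : Fin (m + 1) → Fin n) : ℝ :=
  ∏ j : Fin m, c (g j.castSucc) * c (g j.succ)

lemma pathWt_nonneg {c : Fin n → ℝ} (hc : ∀ b, 0 ≤ c b) (m : ℕ) (g : Fin (m + 1) → Fin n) :
    0 ≤ pathWt c m g :=
  Finset.prod_nonneg fun j _ => mul_nonneg (hc _) (hc _)

lemma pathWt_cons (c : Fin n → ℝ) (m : ℕ) (x : Fin n) (h : Fin (m + 1) → Fin n) :
    pathWt c (m + 1) (Fin.cons x h) = c x * c (h 0) * pathWt c m h := by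
  unfold pathWt
  rw [Fin.prod_univ_succ]
  simp only [← Fin.succ_castSucc, Fin.cons_succ, Fin.castSucc_zero, Fin.cons_zero]

/-- sum of path weights over all (not nec. injective) paths with endpoints fixed -/
def pathSum (c : Fin n → ℝ) (m : ℕ) (v a : Fin n) : ℝ :=
  ∑ g : Fin (m + 1) → Fin n, if g 0 = v ∧ g (Fin.last m) = a then pathWt c m g else 0

lemma pathSum_zero (c : Fin n → ℝ) (v a : Fin n) :
    pathSum c 0 v a = if v = a then 1 else 0 := by
  unfold pathSum
  rw [← Fintype.sum_equiv (Equiv.funUnique (Fin 1) (Fin n)).symm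
      (fun y : Fin n => if y = v ∧ y = a then pathWt c 0 (fun _ => y) else 0)
      (fun g => if g 0 = v ∧ g (Fin.last 0) = a then pathWt c 0 g else 0)
      (fun y => rfl)]
  have hW : ∀ y : Fin n, pathWt c 0 (fun _ => y) = 1 := fun y => by
    unfold pathWt; simp
  by_cases hva : v = a
  · subst hva
    simp only [and_self, hW]
    simp [Finset.sum_ite_eq']
  · rw [Finset.sum_eq_zero, if_neg hva]
    intro y _
    rw [if_neg]
    rintro ⟨rfl, rfl⟩
    exact hva rfl

lemma pathSum_succ (c : Fin n → ℝ) (m : ℕ) (v a : Fin n) :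
    pathSum c (m + 1) v a = ∑ b : Fin n, (c v * c b) * pathSum c m b a := by
  unfold pathSum
  rw [← Fintype.sum_equiv (Fin.consEquiv (fun _ : Fin (m + 2) => Fin n))
      (fun p : Fin n × (Fin (m + 1) → Fin n) =>
        if (Fin.cons p.1 p.2 : Fin (m + 2) → Fin n) 0 = v ∧ (Fin.cons p.1 p.2 : Fin (m + 2) → Fin n) (Fin.last (m + 1)) = a
        then pathWt c (m + 1) (Fin.cons p.1 p.2) else 0)
      (fun g => if g 0 = v ∧ g (Fin.last (m + 1)) = a then pathWt c (m + 1) g else 0)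
      (fun p => rfl)]
  rw [Fintype.sum_prod_type]
  have hterm : ∀ (x : Fin n) (h : Fin (m + 1) → Fin n),
      (if (Fin.cons x h : Fin (m + 2) → Fin n) 0 = v ∧ (Fin.cons x h : Fin (m + 2) → Fin n) (Fin.last (m + 1)) = a
        then pathWt c (m + 1) (Fin.cons x h) else 0)
      = if x = v ∧ h (Fin.last m) = a then c x * c (h 0) * pathWt c m h else 0 := by
    intro x h
    have h2 : (Fin.cons x h : Fin (m + 2) → Fin n) (Fin.last (m + 1)) = h (Fin.last m) := by
      rw [← Fin.succ_last, Fin.cons_succ]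
    rw [pathWt_cons, h2, Fin.cons_zero]
  simp only [hterm]
  have hL : (∑ x : Fin n, ∑ h : Fin (m + 1) → Fin n,
      if x = v ∧ h (Fin.last m) = a then c x * c (h 0) * pathWt c m h else 0)
      = ∑ h : Fin (m + 1) → Fin n,
          if h (Fin.last m) = a then c v * c (h 0) * pathWt c m h else 0 := by
    rw [Finset.sum_eq_single v]
    · refine Finset.sum_congr rfl fun h _ => ?_
      by_cases hq : h (Fin.last m) = a
      · rw [if_pos ⟨rfl, hq⟩, if_pos hq]
      · rw [if_neg (fun hc => hq hc.2), if_neg hq]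
    · intro x _ hx
      exact Finset.sum_eq_zero fun h _ => if_neg fun hc => hx hc.1
    · intro hmem; exact absurd (Finset.mem_univ _) hmem
  rw [hL]
  have hR : ∀ b : Fin n, (c v * c b) *
      (∑ g : Fin (m + 1) → Fin n, if g 0 = b ∧ g (Fin.last m) = a then pathWt c m g else 0)
      = ∑ g : Fin (m + 1) → Fin n,
          if g 0 = b ∧ g (Fin.last m) = a then c v * c (g 0) * pathWt c m g else 0 := by
    intro b
    rw [Finset.mul_sum]
    refine Finset.sum_congr rfl fun g _ => ?_
    by_cases hg : g 0 = b ∧ g (Fin.last m) = a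
    · rw [if_pos hg, if_pos hg, hg.1, mul_assoc]
    · rw [if_neg hg, if_neg hg, mul_zero]
  simp only [hR]
  rw [Finset.sum_comm]
  refine Finset.sum_congr rfl fun h _ => ?_
  rw [Finset.sum_eq_single (h 0)]
  · by_cases hq : h (Fin.last m) = a
    · rw [if_pos hq, if_pos ⟨rfl, hq⟩]
    · rw [if_neg hq, if_neg fun hc => hq hc.2]
  · intro b _ hb
    exact if_neg fun hc => hb hc.1.symm
  · intro hmem; exact absurd (Finset.mem_univ _) hmem

lemma pathSum_closed (c : Fin n → ℝ) (m : ℕ) (v a : Fin n) :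
    pathSum c (m + 1) v a = c v * c a * (∑ b : Fin n, c b ^ 2) ^ m := by
  induction m generalizing v a with
  | zero =>
    rw [pathSum_succ]
    rw [Finset.sum_eq_single a]
    · simp [pathSum_zero]
    · intro b _ hb; simp [pathSum_zero, hb]
    · intro hmem; exact absurd (Finset.mem_univ _) hmem
  | succ m ih =>
    rw [pathSum_succ]
    simp only [ih]
    have : ∀ b : Fin n, (c v * c b) * (c b * c a * (∑ b : Fin n, c b ^ 2) ^ m)
        = (c b ^ 2) * (c v * c a * (∑ b : Fin n, c b ^ 2) ^ m) := fun b => by ring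
    simp only [this]
    rw [← Finset.sum_mul]
    ring

lemma geom_sum_le_pow (x : ℝ) (hx : 0 ≤ x) (N : ℕ) :
    ∑ t ∈ Finset.range N, x ^ t ≤ (x + 1) ^ N := by
  induction N with
  | zero => simp
  | succ N ih =>
    rw [Finset.sum_range_succ']
    have h1 : ∑ i ∈ Finset.range N, x ^ (i + 1) = x * ∑ i ∈ Finset.range N, x ^ i := by
      rw [Finset.mul_sum]; exact Finset.sum_congr rfl fun i _ => by ring
    have h2 : (1 : ℝ) ≤ (x + 1) ^ N := one_le_pow₀ (by linarith)
    have h3 : x * ∑ i ∈ Finset.range N, x ^ i ≤ x * (x + 1) ^ N :=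
      mul_le_mul_of_nonneg_left ih hx
    calc ∑ i ∈ Finset.range N, x ^ (i + 1) + x ^ 0
        = x * ∑ i ∈ Finset.range N, x ^ i + 1 := by rw [h1, pow_zero]
      _ ≤ x * (x + 1) ^ N + (x + 1) ^ N := by linarith
      _ = (x + 1) ^ (N + 1) := by ring

lemma path_event_bound {n : ℕ} {Ω : Type} [MeasurableSpace Ω] (P : Measure Ω)
    (X : Fin n → Fin n → Ω → Bool)
    (hsymm : ∀ u v, X u v = X v u)
    (hindep : iIndepFun
      (fun e : {p : Fin n × Fin n // p.1 < p.2} => X e.1.1 e.1.2) P)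
    (c : Fin n → ℝ) (hc0 : ∀ b, 0 ≤ c b)
    (hcb : ∀ a b : Fin n, a ≠ b → P {ω | X a b ω = true} ≤ ENNReal.ofReal (c a * c b))
    (m : ℕ) (g : Fin (m + 1) → Fin n) (hg : Function.Injective g) :
    P {ω | ∀ j : Fin m, X (g j.castSucc) (g j.succ) ω = true}
      ≤ ENNReal.ofReal (pathWt c m g) := by
  classical
  have hne : ∀ j : Fin m, g j.castSucc ≠ g j.succ := fun j h =>
    (Fin.castSucc_lt_succ : j.castSucc < j.succ).ne (hg h)
  have epf : ∀ j : Fin m, ¬ g j.castSucc < g j.succ → g j.succ < g j.castSucc := by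
    intro j h
    exact lt_of_le_of_ne (not_lt.mp h) fun he => hne j he.symm
  set e : Fin m → {p : Fin n × Fin n // p.1 < p.2} := fun j =>
    if h : g j.castSucc < g j.succ then ⟨(g j.castSucc, g j.succ), h⟩
    else ⟨(g j.succ, g j.castSucc), epf j h⟩ with he
  set S : {p : Fin n × Fin n // p.1 < p.2} → Set Ω :=
    fun i => (X i.1.1 i.1.2) ⁻¹' {true} with hS
  have hBe : ∀ j : Fin m, S (e j) = (X (g j.castSucc) (g j.succ)) ⁻¹' {true} := by
    intro j
    simp only [he, hS]
    split_ifs with h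
    · rfl
    · rw [hsymm]
  have einj : Function.Injective e := by
    intro j j' hjj'
    have hpair : (g j.castSucc = g j'.castSucc ∧ g j.succ = g j'.succ) ∨
        (g j.castSucc = g j'.succ ∧ g j.succ = g j'.castSucc) := by
      simp only [he] at hjj'
      by_cases h1 : g j.castSucc < g j.succ <;> by_cases h2 : g j'.castSucc < g j'.succ
      · rw [dif_pos h1, dif_pos h2] at hjj'
        simp only [Subtype.mk.injEq, Prod.mk.injEq] at hjj'
        tauto
      · rw [dif_pos h1, dif_neg h2] at hjj'
        simp only [Subtype.mk.injEq, Prod.mk.injEq] at hjj'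
        tauto
      · rw [dif_neg h1, dif_pos h2] at hjj'
        simp only [Subtype.mk.injEq, Prod.mk.injEq] at hjj'
        tauto
      · rw [dif_neg h1, dif_neg h2] at hjj'
        simp only [Subtype.mk.injEq, Prod.mk.injEq] at hjj'
        tauto
    have hval : (j : ℕ) = (j' : ℕ) := by
      rcases hpair with ⟨ha, _⟩ | ⟨ha, hb⟩
      · have h1 := hg ha
        have h2 := congrArg Fin.val h1
        simpa using h2
      · have h1 := congrArg Fin.val (hg ha)
        have h2 := congrArg Fin.val (hg hb)
        simp only [Fin.coe_castSucc, Fin.val_succ] at h1 h2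
        omega
    exact Fin.ext hval
  have hset : {ω | ∀ j : Fin m, X (g j.castSucc) (g j.succ) ω = true}
      = ⋂ i ∈ Finset.image e Finset.univ, S i := by
    ext ω
    simp only [Set.mem_setOf_eq, Set.mem_iInter, Finset.mem_image, Finset.mem_univ, true_and]
    constructor
    · rintro hω i ⟨j, rfl⟩
      rw [hBe j]
      exact hω j
    · intro hω j
      have := hω (e j) ⟨j, rfl⟩
      rwa [hBe j] at this
  rw [hset, hindep.meas_biInter fun i _ => ⟨{true}, measurableSet_singleton true, rfl⟩,
    Finset.prod_image fun j _ j' _ h => einj h]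
  have hb : ∀ j : Fin m, P (S (e j)) ≤ ENNReal.ofReal (c (g j.castSucc) * c (g j.succ)) := by
    intro j
    rw [hBe j]
    exact hcb _ _ (hne j)
  calc ∏ j : Fin m, P (S (e j))
      ≤ ∏ j : Fin m, ENNReal.ofReal (c (g j.castSucc) * c (g j.succ)) :=
        Finset.prod_le_prod' fun j _ => hb j
    _ = ENNReal.ofReal (pathWt c m g) := by
        rw [← ENNReal.ofReal_prod_of_nonneg fun j _ => mul_nonneg (hc0 _) (hc0 _)]
        rfl

end Stmt9Aux

open Stmt9Aux

theorem stmt9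
    (n : ℕ) (hn : 1 ≤ n) (θ : ℝ) (hθ : 0 < θ)
    (W : Fin n → ℝ) (hW : ∀ v, 0 < W v)
    {Ω : Type} [MeasurableSpace Ω] (P : Measure Ω) [IsProbabilityMeasure P]
    (X : Fin n → Fin n → Ω → Bool)
    (hmeas : ∀ u v, Measurable (X u v))
    (hsymm : ∀ u v, X u v = X v u)
    (hdiag : ∀ v, X v v = fun _ => false)
    (hdist : ∀ u v, u ≠ v →
      P {ω | X u v ω = true} = ENNReal.ofReal (min (W u * W v / (n * θ)) 1))
    (hindep : iIndepFun
      (fun e : {p : Fin n × Fin n // p.1 < p.2} => X e.1.1 e.1.2) P) :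
    ∀ ℓ : ℕ, 1 ≤ ℓ → ∀ v u u' : Fin n, u ≠ u' → u ≠ v → u' ≠ v →
      P {ω | edgeInBall (fun a b => X a b ω = true) ℓ v u u'}
        ≤ ENNReal.ofReal
            (W v * (W u + W u') / (n * θ) * (Gam n θ W 2 + 1) ^ (ℓ - 1)) := by
  intro ℓ hℓ v u u' huu' huv hu'v
  classical
  have hn' : (0 : ℝ) < n := by
    have : 0 < n := hn
    exact_mod_cast this
  have hnθ : (0 : ℝ) < (n : ℝ) * θ := mul_pos hn' hθ
  set c : Fin n → ℝ := fun b => W b / Real.sqrt ((n : ℝ) * θ) with hcdef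
  have hc0 : ∀ b, 0 ≤ c b := fun b => div_nonneg (hW b).le (Real.sqrt_nonneg _)
  have hcc : ∀ a b : Fin n, c a * c b = W a * W b / ((n : ℝ) * θ) := by
    intro a b
    simp only [hcdef]
    rw [div_mul_div_comm, Real.mul_self_sqrt hnθ.le]
  have hedge : ∀ a b : Fin n, a ≠ b →
      P {ω | X a b ω = true} ≤ ENNReal.ofReal (c a * c b) := by
    intro a b hab
    rw [hdist a b hab, hcc]
    exact ENNReal.ofReal_le_ofReal (min_le_left _ _)
  have hGamEq : (∑ b : Fin n, c b ^ 2) = Gam n θ W 2 := by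
    have hterm : ∀ b : Fin n, c b ^ 2 = W b ^ (2 : ℝ) / ((n : ℝ) * θ) := by
      intro b
      simp only [hcdef]
      rw [Real.rpow_two, div_pow, Real.sq_sqrt hnθ.le]
    rw [Finset.sum_congr rfl fun b _ => hterm b, ← Finset.sum_div]
    rfl
  have hGam0 : 0 ≤ ∑ b : Fin n, c b ^ 2 :=
    Finset.sum_nonneg fun b _ => sq_nonneg _
  set G : ℝ := ∑ b : Fin n, c b ^ 2 with hGdef
  set T : (m : ℕ) → Finset (Fin (m + 1) → Fin n) := fun m =>
    Finset.univ.filter fun g => Function.Injective g ∧ g 0 = v ∧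
      (g (Fin.last m) = u ∨ g (Fin.last m) = u') with hT
  set A : (m : ℕ) → (Fin (m + 1) → Fin n) → Set Ω := fun m g =>
    {ω | ∀ t : Fin m, X (g t.castSucc) (g t.succ) ω = true} with hA
  -- inclusion
  have hsub : {ω | edgeInBall (fun a b => X a b ω = true) ℓ v u u'}
      ⊆ ⋃ m ∈ Finset.Icc 1 (ℓ - 1), ⋃ g ∈ T m, A m g := by
    intro ω hω
    obtain ⟨k, hk, f, ⟨finj, hedges⟩, hf0, i, hcase⟩ := hω
    have key : ∀ a : Fin n, (a = u ∨ a = u') → f i.castSucc = a →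
        ω ∈ ⋃ m ∈ Finset.Icc 1 (ℓ - 1), ⋃ g ∈ T m, A m g := by
      intro a ha hfa
      have hane : a ≠ v := by rcases ha with rfl | rfl; exacts [huv, hu'v]
      have him : (i : ℕ) ≠ 0 := by
        intro h0
        apply hane
        rw [← hfa, ← hf0]
        congr 1
        exact Fin.ext (by simp [h0])
      have hik : (i : ℕ) < k := i.isLt
      have hmle : (i : ℕ) ≤ ℓ - 1 := by omega
      have hm1 : (i : ℕ) + 1 ≤ k + 1 := by omega
      set g : Fin ((i : ℕ) + 1) → Fin n := fun t => f (Fin.castLE hm1 t) with hg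
      have hginj : Function.Injective g := fun x y hxy =>
        Fin.castLE_injective hm1 (finj hxy)
      have hg0 : g 0 = v := by
        have h0 : Fin.castLE hm1 0 = (0 : Fin (k + 1)) := Fin.ext (by simp)
        simp only [hg]
        rw [h0]
        exact hf0
      have hglast : g (Fin.last (i : ℕ)) = a := by
        have h1 : Fin.castLE hm1 (Fin.last (i : ℕ)) = i.castSucc := Fin.ext (by simp)
        simp only [hg]
        rw [h1]
        exact hfa
      have hgT : g ∈ T (i : ℕ) := by
        rw [hT]
        refine Finset.mem_filter.mpr ⟨Finset.mem_univ _, hginj, hg0, ?_⟩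
        rcases ha with rfl | rfl
        · exact Or.inl hglast
        · exact Or.inr hglast
      have hωA : ω ∈ A (i : ℕ) g := by
        rw [hA]
        intro t
        have ht : (t : ℕ) < k := by have := t.isLt; omega
        have e1 : g t.castSucc = f ((⟨(t : ℕ), ht⟩ : Fin k).castSucc) :=
          congrArg f (Fin.ext (by simp))
        have e2 : g t.succ = f ((⟨(t : ℕ), ht⟩ : Fin k).succ) :=
          congrArg f (Fin.ext (by simp))
        rw [e1, e2]
        exact hedges _
      exact Set.mem_iUnion₂.mpr ⟨(i : ℕ), Finset.mem_Icc.mpr ⟨by omega, hmle⟩,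
        Set.mem_iUnion₂.mpr ⟨g, hgT, hωA⟩⟩
    rcases hcase with ⟨h1, _⟩ | ⟨h1, _⟩
    · exact key u (Or.inl rfl) h1
    · exact key u' (Or.inr rfl) h1
  -- per-m bound
  have hperm : ∀ m ∈ Finset.Icc 1 (ℓ - 1),
      P (⋃ g ∈ T m, A m g) ≤ ENNReal.ofReal (c v * (c u + c u') * G ^ (m - 1)) := by
    intro m hm
    have hm1 : 1 ≤ m := (Finset.mem_Icc.mp hm).1
    obtain ⟨m', rfl⟩ : ∃ m', m = m' + 1 := ⟨m - 1, by omega⟩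
    have hite : ∀ g : Fin (m' + 1 + 1) → Fin n, (0 : ℝ) ≤
        (if g 0 = v ∧ g (Fin.last (m' + 1)) = u then pathWt c (m' + 1) g else 0) := by
      intro g
      split_ifs
      · exact pathWt_nonneg hc0 _ _
      · exact le_rfl
    have hite' : ∀ g : Fin (m' + 1 + 1) → Fin n, (0 : ℝ) ≤
        (if g 0 = v ∧ g (Fin.last (m' + 1)) = u' then pathWt c (m' + 1) g else 0) := by
      intro g
      split_ifs
      · exact pathWt_nonneg hc0 _ _
      · exact le_rfl
    have hsumT : ∑ g ∈ T (m' + 1), pathWt c (m' + 1) g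
        ≤ pathSum c (m' + 1) v u + pathSum c (m' + 1) v u' := by
      have step1 : ∀ g ∈ T (m' + 1), pathWt c (m' + 1) g ≤
          (if g 0 = v ∧ g (Fin.last (m' + 1)) = u then pathWt c (m' + 1) g else 0)
          + (if g 0 = v ∧ g (Fin.last (m' + 1)) = u' then pathWt c (m' + 1) g else 0) := by
        intro g hg
        rw [hT] at hg
        obtain ⟨-, -, h0, hor⟩ := Finset.mem_filter.mp hg
        rcases hor with hu | hu
        · rw [if_pos ⟨h0, hu⟩]
          exact le_add_of_nonneg_right (hite' g)
        · rw [if_pos (show g 0 = v ∧ g (Fin.last (m' + 1)) = u' from ⟨h0, hu⟩)]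
          exact le_add_of_nonneg_left (hite g)
      calc ∑ g ∈ T (m' + 1), pathWt c (m' + 1) g
          ≤ ∑ g ∈ T (m' + 1),
            ((if g 0 = v ∧ g (Fin.last (m' + 1)) = u then pathWt c (m' + 1) g else 0)
            + (if g 0 = v ∧ g (Fin.last (m' + 1)) = u' then pathWt c (m' + 1) g else 0)) :=
            Finset.sum_le_sum step1
        _ ≤ ∑ g : Fin (m' + 1 + 1) → Fin n,
            ((if g 0 = v ∧ g (Fin.last (m' + 1)) = u then pathWt c (m' + 1) g else 0)
            + (if g 0 = v ∧ g (Fin.last (m' + 1)) = u' then pathWt c (m' + 1) g else 0)) :=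
            Finset.sum_le_sum_of_subset_of_nonneg (Finset.subset_univ _)
              fun g _ _ => add_nonneg (hite g) (hite' g)
        _ = pathSum c (m' + 1) v u + pathSum c (m' + 1) v u' := by
            rw [Finset.sum_add_distrib]
            rfl
    calc P (⋃ g ∈ T (m' + 1), A (m' + 1) g)
        ≤ ∑ g ∈ T (m' + 1), P (A (m' + 1) g) := measure_biUnion_finset_le _ _
      _ ≤ ∑ g ∈ T (m' + 1), ENNReal.ofReal (pathWt c (m' + 1) g) := by
          refine Finset.sum_le_sum fun g hg => ?_
          have hginj : Function.Injective g := by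
            rw [hT] at hg
            exact (Finset.mem_filter.mp hg).2.1
          exact path_event_bound P X hsymm hindep c hc0 hedge (m' + 1) g hginj
      _ = ENNReal.ofReal (∑ g ∈ T (m' + 1), pathWt c (m' + 1) g) :=
          (ENNReal.ofReal_sum_of_nonneg fun g _ => pathWt_nonneg hc0 _ _).symm
      _ ≤ ENNReal.ofReal (pathSum c (m' + 1) v u + pathSum c (m' + 1) v u') :=
          ENNReal.ofReal_le_ofReal hsumT
      _ = ENNReal.ofReal (c v * (c u + c u') * G ^ (m' + 1 - 1)) := by
          rw [pathSum_closed, pathSum_closed]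
          congr 1
          rw [← hGdef, Nat.add_sub_cancel]
          ring
  -- reindex and geometric bound
  have hre : ∀ N : ℕ, ∑ m ∈ Finset.Icc 1 N, G ^ (m - 1) = ∑ t ∈ Finset.range N, G ^ t := by
    intro N
    induction N with
    | zero => simp
    | succ N ih =>
      rw [Finset.sum_Icc_succ_top (by omega), ih, Finset.sum_range_succ]
      simp
  have hfinal : ∑ m ∈ Finset.Icc 1 (ℓ - 1), c v * (c u + c u') * G ^ (m - 1)
      ≤ W v * (W u + W u') / ((n : ℝ) * θ) * (Gam n θ W 2 + 1) ^ (ℓ - 1) := by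
    have hK : c v * (c u + c u') = W v * (W u + W u') / ((n : ℝ) * θ) := by
      rw [mul_add, hcc, hcc]
      field_simp
    have hK0 : 0 ≤ c v * (c u + c u') :=
      mul_nonneg (hc0 v) (add_nonneg (hc0 u) (hc0 u'))
    rw [← Finset.mul_sum, hre (ℓ - 1), hK, ← hGamEq]
    refine mul_le_mul_of_nonneg_left (geom_sum_le_pow G hGam0 (ℓ - 1)) ?_
    rw [← hK]
    exact hK0
  calc P {ω | edgeInBall (fun a b => X a b ω = true) ℓ v u u'}
      ≤ P (⋃ m ∈ Finset.Icc 1 (ℓ - 1), ⋃ g ∈ T m, A m g) := measure_mono hsub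
    _ ≤ ∑ m ∈ Finset.Icc 1 (ℓ - 1), P (⋃ g ∈ T m, A m g) := measure_biUnion_finset_le _ _
    _ ≤ ∑ m ∈ Finset.Icc 1 (ℓ - 1), ENNReal.ofReal (c v * (c u + c u') * G ^ (m - 1)) :=
        Finset.sum_le_sum hperm
    _ = ENNReal.ofReal (∑ m ∈ Finset.Icc 1 (ℓ - 1), c v * (c u + c u') * G ^ (m - 1)) :=
        (ENNReal.ofReal_sum_of_nonneg fun m _ =>
          mul_nonneg (mul_nonneg (hc0 v) (add_nonneg (hc0 u) (hc0 u')))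
            (pow_nonneg hGam0 _)).symm
    _ ≤ ENNReal.ofReal
          (W v * (W u + W u') / ((n : ℝ) * θ) * (Gam n θ W 2 + 1) ^ (ℓ - 1)) :=
        ENNReal.ofReal_le_ofReal hfinal
end
end

section
/- Under the assumption that |Δ_e f| ≤ 1{max(X_e, X'_e) = 1}·H_E(w_e, w'_e, w_v, w_u) for every edge e = {u,v} ∈ V_n^(2), where H_E : [0,∞)^4 → ℝ is measurable with J_E := max(1, E[H_E(w_e, w'_e, w_v, w_u)^6]) < ∞, one has Σ_{e ∈ V_n^(2)} E[|Δ_e f|³] ≤ 2·n·θ·Γ_{1,n}²·J_E^{1/2}. -/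
open MeasureTheory ProbabilityTheory Real
open scoped ENNReal

noncomputable section
open Classical

/-- ordered representatives of the unordered pairs `V_n^(2)`. -/
abbrev EdgeIdx (n : ℕ) := {p : Fin n × Fin n // p.1 < p.2}

/-- sites: vertices and (possible) edges, `V_n ∪ V_n^(2)`. -/
abbrev Site (n : ℕ) := Fin n ⊕ EdgeIdx n

/-- the data attached to a site: a weight for a vertex, an indicator plus a weight
for an edge. -/
abbrev SiteData (n : ℕ) : Site n → Type := fun s =>
  match s with
  | Sum.inl _ => ℝ
  | Sum.inr _ => Bool × ℝ

instance (n : ℕ) (s : Site n) : MeasurableSpace (SiteData n s) :=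
  match s with
  | Sum.inl _ => inferInstanceAs (MeasurableSpace ℝ)
  | Sum.inr _ => inferInstanceAs (MeasurableSpace (Bool × ℝ))

/-- a configuration of a weighted graph on `Fin n`: edge indicators together with
edge weights and vertex weights. -/
abbrev Conf (n : ℕ) := ∀ s : Site n, SiteData n s

/-- replace the data of `ξ` by that of `ξ'` at all sites in `F`. -/
def recomb {n : ℕ} (ξ ξ' : Conf n) (F : Set (Site n)) : Conf n :=
  fun s => if s ∈ F then ξ' s else ξ s

/-- the indicator of the (possible) edge `{a,b}` in a configuration. -/
def eInd {n : ℕ} (c : Conf n) (a b : Fin n) : Bool :=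
  if h : a < b then (c (Sum.inr ⟨(a, b), h⟩)).1
  else if h : b < a then (c (Sum.inr ⟨(b, a), h⟩)).1
  else false

/-- the weight of the (possible) edge `{a,b}` in a configuration. -/
def eWt {n : ℕ} (c : Conf n) (a b : Fin n) : ℝ :=
  if h : a < b then (c (Sum.inr ⟨(a, b), h⟩)).2
  else if h : b < a then (c (Sum.inr ⟨(b, a), h⟩)).2
  else 0

/-- the degree `|D_1(v)|` of a vertex in the graph of a configuration. -/
def deg {n : ℕ} (c : Conf n) (v : Fin n) : ℕ :=
  ∑ u : Fin n, if u ≠ v ∧ eInd c v u = true then 1 else 0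

/-- covariance of two real random variables. -/
def cov {Ω : Type} [MeasurableSpace Ω] (P : Measure Ω) (f g : Ω → ℝ) : ℝ :=
  (∫ ω, f ω * g ω ∂P) - (∫ ω, f ω ∂P) * (∫ ω, g ω ∂P)


/-!
Fix an edge `e = {u, v}` and put `H := H_E(w_e, w'_e, w_u, w_v)`. The hypothesis on `Δ_e f` gives
`|Δ_e f|³ ≤ (1{X_e = 1} + 1{X'_e = 1}) |H|³`. The indicator `X_e` is independent of its own weight
`w_e`, and the whole site `(X_e, w_e)` is independent of `(w'_e, w_u, w_v)`; hence `X_e` is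
independent of `H`, and likewise `X'_e`. Therefore
`E|Δ_e f|³ ≤ 2 P(X_e = 1) E|H|³ ≤ 2 (W_u W_v / (nθ)) J_E^{1/2}`, using `(E|H|³)² ≤ E[H⁶]`.
Summing over edges, `2 Σ_{u<v} W_u W_v ≤ (Σ_u W_u)² = (nθ Γ_{1,n})²`.
-/

lemma abs_pow_three_sq (x : ℝ) : (|x| ^ 3) ^ 2 = x ^ 6 := by
  rw [← pow_mul, show 3 * 2 = 2 * 3 from rfl, pow_mul, sq_abs, ← pow_mul]

lemma two_mul_sum_edgeIdx_le_sq_sum {n : ℕ} (W : Fin n → ℝ) :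
    2 * ∑ e : EdgeIdx n, W e.1.1 * W e.1.2 ≤ (∑ u, W u) ^ 2 := by
  set g : Fin n × Fin n → ℝ := fun p => W p.1 * W p.2
  have hlt : ∑ e : EdgeIdx n, g e.1 = ∑ p with p.1 < p.2, g p :=
    (Finset.sum_subtype _ (by simp) g).symm
  have hswap : ∑ p with p.1 < p.2, g p = ∑ p with p.2 < p.1, g p :=
    Finset.sum_nbij' Prod.swap Prod.swap (by simp) (by simp) (by simp) (by simp)
      (by simp [g, mul_comm])
  have hdiag : ∑ p with p.2 < p.1, g p ≤ ∑ p with ¬p.1 < p.2, g p := by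
    refine Finset.sum_le_sum_of_subset_of_nonneg (fun p => by simpa using le_of_lt) ?_
    intro p hp hp'
    have hp : p.1 = p.2 := by simp at hp hp'; omega
    simpa [g, hp] using mul_self_nonneg (W p.2)
  have hsq : ∑ p with p.1 < p.2, g p + ∑ p with ¬p.1 < p.2, g p = (∑ u, W u) ^ 2 := by
    rw [Finset.sum_filter_add_sum_filter_not, sq, Finset.sum_mul_sum, ← Finset.sum_product']
    rfl
  change 2 * ∑ e : EdgeIdx n, g e.1 ≤ _
  linarith

lemma sum_edgeIdx_le_two_mul_Gam_sq {n : ℕ} {θ : ℝ} (hθ : 0 ≤ θ) (W : Fin n → ℝ) {c : ℝ}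
    (hc : 0 ≤ c) :
    ∑ e : EdgeIdx n, 2 * (W e.1.1 * W e.1.2 / (n * θ)) * c ≤ 2 * n * θ * Gam n θ W 1 ^ 2 * c := by
  have hGam : n * θ * Gam n θ W 1 ^ 2 = (∑ u, W u) ^ 2 / (n * θ) := by
    simp only [Gam, Real.rpow_one]
    rcases eq_or_ne ((n : ℝ) * θ) 0 with h | h
    · simp [h]
    · field_simp
  have hS : 0 ≤ (∑ u, W u) ^ 2 / (n * θ) * c := by positivity
  calc ∑ e : EdgeIdx n, 2 * (W e.1.1 * W e.1.2 / (n * θ)) * c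
      = 2 * (∑ e : EdgeIdx n, W e.1.1 * W e.1.2) / (n * θ) * c := by
        rw [Finset.mul_sum, Finset.sum_div, Finset.sum_mul]
        exact Finset.sum_congr rfl fun e _ => by ring
    _ ≤ (∑ u, W u) ^ 2 / (n * θ) * c := by
        gcongr
        exact two_mul_sum_edgeIdx_le_sq_sum W
    _ ≤ 2 * n * θ * Gam n θ W 1 ^ 2 * c := by
        rw [mul_assoc 2, mul_assoc 2, hGam]
        linarith

section Probability

variable {Ω : Type*} [MeasurableSpace Ω] {P : Measure Ω}

lemma memLp_two_abs_pow_three {H : Ω → ℝ} (hH : AEStronglyMeasurable H P)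
    (hH6 : Integrable (fun ω => H ω ^ 6) P) : MemLp (fun ω => |H ω| ^ 3) 2 P :=
  (memLp_two_iff_integrable_sq (by fun_prop)).2
    (hH6.congr (.of_forall fun ω => (abs_pow_three_sq (H ω)).symm))

lemma ProbabilityTheory.IndepFun.integral_indicator_eq_measureReal_mul {X : Ω → Bool}
    {Y : Ω → ℝ} (hXY : IndepFun X Y P) (hX : Measurable X) (hY : AEStronglyMeasurable Y P) :
    ∫ ω, {ω | X ω = true}.indicator Y ω ∂P = P.real {ω | X ω = true} * ∫ ω, Y ω ∂P := by
  set φ : Bool → ℝ := fun b => if b then 1 else 0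
  have hind : {ω | X ω = true}.indicator Y = fun ω => φ (X ω) * Y ω := by
    ext ω
    by_cases h : X ω = true <;> simp [φ, h]
  have hφX : (fun ω => φ (X ω)) = {ω | X ω = true}.indicator 1 := by
    ext ω
    by_cases h : X ω = true <;> simp [φ, h]
  have hmul := (hXY.comp (measurable_of_countable φ) measurable_id).integral_fun_mul_eq_mul_integral
    ((measurable_of_countable φ).comp hX).aestronglyMeasurable hY
  simp only [Function.comp_def, id] at hmul
  have hXset : MeasurableSet {ω | X ω = true} := hX (measurableSet_singleton true)
  rw [hind, hmul, hφX, integral_indicator_one hXset]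

lemma measureReal_le_of_eq_ofReal_min {s : Set Ω} {x : ℝ} (hx : 0 ≤ x)
    (hs : P s = ENNReal.ofReal (min x 1)) : P.real s ≤ x := by
  rw [measureReal_def, hs, ENNReal.toReal_ofReal (le_min hx zero_le_one)]
  exact min_le_left _ _

variable [IsProbabilityMeasure P]

lemma ProbabilityTheory.IndepFun.indepFun_prodMk_right {α β γ : Type*} [MeasurableSpace α]
    [MeasurableSpace β] [MeasurableSpace γ] {a : Ω → α} {b : Ω → β} {c : Ω → γ}
    (hab : IndepFun a b P) (habc : IndepFun (fun ω => (a ω, b ω)) c P)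
    (ha : Measurable a) (hb : Measurable b) (hc : Measurable c) :
    IndepFun a (fun ω => (b ω, c ω)) P := by
  have hbc : IndepFun b c P := habc.comp measurable_snd measurable_id
  rw [indepFun_iff_map_prod_eq_prod_map_map ha.aemeasurable (hb.prodMk hc).aemeasurable]
  rw [indepFun_iff_map_prod_eq_prod_map_map (ha.prodMk hb).aemeasurable hc.aemeasurable] at habc
  rw [indepFun_iff_map_prod_eq_prod_map_map ha.aemeasurable hb.aemeasurable] at hab
  rw [indepFun_iff_map_prod_eq_prod_map_map hb.aemeasurable hc.aemeasurable] at hbc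
  have hassoc : (fun ω => (a ω, b ω, c ω))
      = MeasurableEquiv.prodAssoc ∘ (fun ω => ((a ω, b ω), c ω)) := rfl
  rw [hassoc, ← Measure.map_map MeasurableEquiv.prodAssoc.measurable
    ((ha.prodMk hb).prodMk hc), habc, hab, Measure.prodAssoc_prod, hbc]

lemma integral_abs_pow_three_le_sqrt_integral_pow_six {H : Ω → ℝ}
    (hH : AEStronglyMeasurable H P) (hH6 : Integrable (fun ω => H ω ^ 6) P) :
    ∫ ω, |H ω| ^ 3 ∂P ≤ √(∫ ω, H ω ^ 6 ∂P) := by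
  have hvar := variance_nonneg (fun ω => |H ω| ^ 3) P
  rw [variance_eq_sub (memLp_two_abs_pow_three hH hH6)] at hvar
  have hsq : (fun ω => |H ω| ^ 3) ^ 2 = fun ω => H ω ^ 6 := funext fun ω => abs_pow_three_sq (H ω)
  rw [hsq] at hvar
  exact Real.le_sqrt_of_sq_le (by linarith)

lemma integral_abs_pow_three_le_of_indepFun {X X' : Ω → Bool} {H D : Ω → ℝ}
    (hX : Measurable X) (hX' : Measurable X') (hH : Measurable H)
    (hXH : IndepFun X H P) (hX'H : IndepFun X' H P) (hH6 : Integrable (fun ω => H ω ^ 6) P)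
    (hD : ∀ ω, |D ω| ≤ if X ω = true ∨ X' ω = true then H ω else 0) :
    ∫ ω, |D ω| ^ 3 ∂P
      ≤ (P.real {ω | X ω = true} + P.real {ω | X' ω = true}) * √(∫ ω, H ω ^ 6 ∂P) := by
  set G : Ω → ℝ := fun ω => |H ω| ^ 3
  have hGm : AEStronglyMeasurable G P := by fun_prop
  have hG : Integrable G P :=
    (memLp_two_abs_pow_three hH.aestronglyMeasurable hH6).integrable one_le_two
  have hcube : Measurable fun h : ℝ => |h| ^ 3 := by fun_prop
  have hXG : IndepFun X G P := hXH.comp measurable_id hcube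
  have hX'G : IndepFun X' G P := hX'H.comp measurable_id hcube
  have hXset : MeasurableSet {ω | X ω = true} := hX (measurableSet_singleton true)
  have hX'set : MeasurableSet {ω | X' ω = true} := hX' (measurableSet_singleton true)
  have hpointwise : ∀ ω, |D ω| ^ 3
      ≤ {ω | X ω = true}.indicator G ω + {ω | X' ω = true}.indicator G ω := by
    intro ω
    have hI : ∀ s : Set Ω, 0 ≤ s.indicator G ω :=
      fun s => Set.indicator_nonneg (fun ω _ => by positivity) ω
    by_cases hc : X ω = true ∨ X' ω = true
    · have hDG : |D ω| ^ 3 ≤ G ω :=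
        pow_le_pow_left₀ (abs_nonneg _) ((if_pos hc ▸ hD ω).trans (le_abs_self _)) 3
      rcases hc with h | h
      · simpa [Set.indicator_of_mem, h] using hDG.trans (le_add_of_nonneg_right (hI _))
      · simpa [Set.indicator_of_mem, h] using hDG.trans (le_add_of_nonneg_left (hI _))
    · have hD0 : |D ω| = 0 := le_antisymm (by simpa only [if_neg hc] using hD ω) (abs_nonneg _)
      rw [hD0, zero_pow three_ne_zero]
      exact add_nonneg (hI _) (hI _)
  calc ∫ ω, |D ω| ^ 3 ∂P
      ≤ ∫ ω, ({ω | X ω = true}.indicator G ω + {ω | X' ω = true}.indicator G ω) ∂P :=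
        integral_mono_of_nonneg (.of_forall fun ω => by positivity)
          ((hG.indicator hXset).add (hG.indicator hX'set)) (.of_forall hpointwise)
    _ = (P.real {ω | X ω = true} + P.real {ω | X' ω = true}) * ∫ ω, G ω ∂P := by
        rw [integral_add (hG.indicator hXset) (hG.indicator hX'set),
          hXG.integral_indicator_eq_measureReal_mul hX hGm,
          hX'G.integral_indicator_eq_measureReal_mul hX' hGm, add_mul]
    _ ≤ _ := by
        gcongr
        exact integral_abs_pow_three_le_sqrt_integral_pow_six hH.aestronglyMeasurable hH6

-- `F (s, false)` is the data at site `s` of the configuration, `F (s, true)` that of its copy.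
lemma indepFun_edgeIndicator_of_iIndepFun {n : ℕ} {F : ∀ i : Site n × Bool, Ω → SiteData n i.1}
    (hF : iIndepFun F P) (hFm : ∀ i, Measurable (F i)) (e : EdgeIdx n) (b : Bool)
    (hE : IndepFun (fun ω => (F (.inr e, b) ω).1) (fun ω => (F (.inr e, b) ω).2) P) :
    IndepFun (fun ω => (F (.inr e, b) ω).1)
      (fun ω => ((F (.inr e, b) ω).2, (F (.inr e, !b) ω).2,
        (F (.inl e.1.1, false) ω : ℝ), (F (.inl e.1.2, false) ω : ℝ))) P := by
  set S : Finset (Site n × Bool) := {(.inr e, b)}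
  set T : Finset (Site n × Bool) := {(.inr e, !b), (.inl e.1.1, false), (.inl e.1.2, false)}
  have hST : IndepFun (F (.inr e, b)) (fun ω => ((F (.inr e, !b) ω).2,
      (F (.inl e.1.1, false) ω : ℝ), (F (.inl e.1.2, false) ω : ℝ))) P :=
    (hF.indepFun_finset S T (by simp [S, T]) hFm).comp
      (φ := fun x : ∀ i : S, SiteData n i.1.1 => x ⟨(.inr e, b), by simp [S]⟩)
      (ψ := fun x : ∀ i : T, SiteData n i.1.1 => ((x ⟨(.inr e, !b), by simp [T]⟩).2,
        (x ⟨(.inl e.1.1, false), by simp [T]⟩ : ℝ), (x ⟨(.inl e.1.2, false), by simp [T]⟩ : ℝ)))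
      (measurable_pi_apply _) (by fun_prop)
  exact hE.indepFun_prodMk_right hST (measurable_fst.comp (hFm _))
    (measurable_snd.comp (hFm _)) ((measurable_snd.comp (hFm _)).prodMk ((hFm _).prodMk (hFm _)))

end Probability

theorem stmt14_general
    (n : ℕ) (θ : ℝ) (hθ : 0 < θ)
    (W : Fin n → ℝ) (hW : ∀ v, 0 < W v)
    {Ω : Type} [MeasurableSpace Ω] (P : Measure Ω) [IsProbabilityMeasure P]
    (ξ ξ' : Ω → Conf n)
    (hmeas : ∀ s, Measurable fun ω => ξ ω s)
    (hmeas' : ∀ s, Measurable fun ω => ξ' ω s)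
    -- all the variables (edge indicators, edge weights, vertex weights, and their
    -- independent copies) are mutually independent ...
    (hindep : iIndepFun
      (fun (i : Site n × Bool) ω => if i.2 = true then ξ' ω i.1 else ξ ω i.1) P)
    -- ... where within an edge site the indicator and the weight are independent too
    (hindepE : ∀ e : EdgeIdx n,
      IndepFun (fun ω => (ξ ω (Sum.inr e)).1) (fun ω => (ξ ω (Sum.inr e)).2) P)
    (hindepE' : ∀ e : EdgeIdx n,
      IndepFun (fun ω => (ξ' ω (Sum.inr e)).1) (fun ω => (ξ' ω (Sum.inr e)).2) P)
    -- distributions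
    (hBer : ∀ e : EdgeIdx n,
      P {ω | (ξ ω (Sum.inr e)).1 = true}
        = ENNReal.ofReal (min (W e.1.1 * W e.1.2 / (n * θ)) 1))
    (hBer' : ∀ e : EdgeIdx n,
      P {ω | (ξ' ω (Sum.inr e)).1 = true}
        = ENNReal.ofReal (min (W e.1.1 * W e.1.2 / (n * θ)) 1))
    (f : Conf n → ℝ)
    (HE : ℝ → ℝ → ℝ → ℝ → ℝ)
    (hHE : Measurable fun q : ℝ × ℝ × ℝ × ℝ => HE q.1 q.2.1 q.2.2.1 q.2.2.2)
    (JE : ℝ)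
    (hJEint : ∀ e : EdgeIdx n, Integrable (fun ω =>
      (HE ((ξ ω (Sum.inr e)).2) ((ξ' ω (Sum.inr e)).2)
        (ξ ω (Sum.inl e.1.1)) (ξ ω (Sum.inl e.1.2))) ^ 6) P)
    (hJE : ∀ e : EdgeIdx n,
      (∫ ω, (HE ((ξ ω (Sum.inr e)).2) ((ξ' ω (Sum.inr e)).2)
        (ξ ω (Sum.inl e.1.1)) (ξ ω (Sum.inl e.1.2))) ^ 6 ∂P) ≤ JE)
    (hbound : ∀ (e : EdgeIdx n) (ω : Ω),
      |f (ξ ω) - f (recomb (ξ ω) (ξ' ω) {Sum.inr e})|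
        ≤ (if (ξ ω (Sum.inr e)).1 = true ∨ (ξ' ω (Sum.inr e)).1 = true then
            HE ((ξ ω (Sum.inr e)).2) ((ξ' ω (Sum.inr e)).2)
              (ξ ω (Sum.inl e.1.1)) (ξ ω (Sum.inl e.1.2))
          else 0)) :
    ∑ e : EdgeIdx n, ∫ ω, |f (ξ ω) - f (recomb (ξ ω) (ξ' ω) {Sum.inr e})| ^ 3 ∂P
      ≤ 2 * n * θ * Gam n θ W 1 ^ 2 * Real.sqrt JE := by
  have hnθ : 0 ≤ (n : ℝ) * θ := by positivity
  have hFm : ∀ i : Site n × Bool,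
      Measurable fun ω => if i.2 = true then ξ' ω i.1 else ξ ω i.1
    | (s, false) => hmeas s
    | (s, true) => hmeas' s
  have hedge : ∀ e : EdgeIdx n,
      ∫ ω, |f (ξ ω) - f (recomb (ξ ω) (ξ' ω) {Sum.inr e})| ^ 3 ∂P
        ≤ 2 * (W e.1.1 * W e.1.2 / (n * θ)) * √JE := by
    intro e
    have hp0 : 0 ≤ W e.1.1 * W e.1.2 / (n * θ) :=
      div_nonneg (mul_pos (hW _) (hW _)).le hnθ
    have hX := indepFun_edgeIndicator_of_iIndepFun hindep hFm e false (hindepE e)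
    have hX' := indepFun_edgeIndicator_of_iIndepFun hindep hFm e true (hindepE' e)
    have hHE_swap : Measurable fun q : ℝ × ℝ × ℝ × ℝ => HE q.2.1 q.1 q.2.2.1 q.2.2.2 :=
      hHE.comp (measurable_snd.fst.prodMk (measurable_fst.prodMk measurable_snd.snd))
    calc _ ≤ (P.real {ω | (ξ ω (Sum.inr e)).1 = true} + P.real {ω | (ξ' ω (Sum.inr e)).1 = true})
          * √(∫ ω, (HE ((ξ ω (Sum.inr e)).2) ((ξ' ω (Sum.inr e)).2)
              (ξ ω (Sum.inl e.1.1)) (ξ ω (Sum.inl e.1.2))) ^ 6 ∂P) :=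
          integral_abs_pow_three_le_of_indepFun (measurable_fst.comp (hmeas _))
            (measurable_fst.comp (hmeas' _)) (by fun_prop) (hX.comp measurable_id hHE)
            (hX'.comp measurable_id hHE_swap)
            (hJEint e) (hbound e)
      _ ≤ (W e.1.1 * W e.1.2 / (n * θ) + W e.1.1 * W e.1.2 / (n * θ)) * √JE := by
          gcongr
          exacts [measureReal_le_of_eq_ofReal_min hp0 (hBer e),
            measureReal_le_of_eq_ofReal_min hp0 (hBer' e), hJE e]
      _ = 2 * (W e.1.1 * W e.1.2 / (n * θ)) * √JE := by ring
  calc _ ≤ ∑ e : EdgeIdx n, 2 * (W e.1.1 * W e.1.2 / (n * θ)) * √JE :=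
        Finset.sum_le_sum fun e _ => hedge e
    _ ≤ 2 * n * θ * Gam n θ W 1 ^ 2 * √JE := sum_edgeIdx_le_two_mul_Gam_sq hθ.le W (sqrt_nonneg _)

theorem stmt14
    (n : ℕ) (hn : 1 ≤ n) (θ : ℝ) (hθ : 0 < θ)
    (W : Fin n → ℝ) (hW : ∀ v, 0 < W v)
    {Ω : Type} [MeasurableSpace Ω] (P : Measure Ω) [IsProbabilityMeasure P]
    (μE μV : Measure ℝ) [IsProbabilityMeasure μE] [IsProbabilityMeasure μV]
    (hμE : μE (Set.Iio 0) = 0) (hμV : μV (Set.Iio 0) = 0)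
    (ξ ξ' : Ω → Conf n)
    (hmeas : ∀ s, Measurable fun ω => ξ ω s)
    (hmeas' : ∀ s, Measurable fun ω => ξ' ω s)
    -- all the variables (edge indicators, edge weights, vertex weights, and their
    -- independent copies) are mutually independent ...
    (hindep : iIndepFun
      (fun (i : Site n × Bool) ω => if i.2 = true then ξ' ω i.1 else ξ ω i.1) P)
    -- ... where within an edge site the indicator and the weight are independent too
    (hindepE : ∀ e : EdgeIdx n,
      IndepFun (fun ω => (ξ ω (Sum.inr e)).1) (fun ω => (ξ ω (Sum.inr e)).2) P)
    (hindepE' : ∀ e : EdgeIdx n,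
      IndepFun (fun ω => (ξ' ω (Sum.inr e)).1) (fun ω => (ξ' ω (Sum.inr e)).2) P)
    -- distributions
    (hBer : ∀ e : EdgeIdx n,
      P {ω | (ξ ω (Sum.inr e)).1 = true}
        = ENNReal.ofReal (min (W e.1.1 * W e.1.2 / (n * θ)) 1))
    (hBer' : ∀ e : EdgeIdx n,
      P {ω | (ξ' ω (Sum.inr e)).1 = true}
        = ENNReal.ofReal (min (W e.1.1 * W e.1.2 / (n * θ)) 1))
    (hwE : ∀ e : EdgeIdx n, Measure.map (fun ω => (ξ ω (Sum.inr e)).2) P = μE)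
    (hwE' : ∀ e : EdgeIdx n, Measure.map (fun ω => (ξ' ω (Sum.inr e)).2) P = μE)
    (hwV : ∀ v : Fin n, Measure.map (fun ω => ξ ω (Sum.inl v)) P = μV)
    (hwV' : ∀ v : Fin n, Measure.map (fun ω => ξ' ω (Sum.inl v)) P = μV)
    (f : Conf n → ℝ) (hf : Measurable f)
    (HE : ℝ → ℝ → ℝ → ℝ → ℝ)
    (hHE : Measurable fun q : ℝ × ℝ × ℝ × ℝ => HE q.1 q.2.1 q.2.2.1 q.2.2.2)
    (JE : ℝ) (hJE1 : 1 ≤ JE)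
    (hJEint : ∀ e : EdgeIdx n, Integrable (fun ω =>
      (HE ((ξ ω (Sum.inr e)).2) ((ξ' ω (Sum.inr e)).2)
        (ξ ω (Sum.inl e.1.1)) (ξ ω (Sum.inl e.1.2))) ^ 6) P)
    (hJE : ∀ e : EdgeIdx n,
      (∫ ω, (HE ((ξ ω (Sum.inr e)).2) ((ξ' ω (Sum.inr e)).2)
        (ξ ω (Sum.inl e.1.1)) (ξ ω (Sum.inl e.1.2))) ^ 6 ∂P) ≤ JE)
    (hbound : ∀ (e : EdgeIdx n) (ω : Ω),
      |f (ξ ω) - f (recomb (ξ ω) (ξ' ω) {Sum.inr e})|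
        ≤ (if (ξ ω (Sum.inr e)).1 = true ∨ (ξ' ω (Sum.inr e)).1 = true then
            HE ((ξ ω (Sum.inr e)).2) ((ξ' ω (Sum.inr e)).2)
              (ξ ω (Sum.inl e.1.1)) (ξ ω (Sum.inl e.1.2))
          else 0)) :
    ∑ e : EdgeIdx n, ∫ ω, |f (ξ ω) - f (recomb (ξ ω) (ξ' ω) {Sum.inr e})| ^ 3 ∂P
      ≤ 2 * n * θ * Gam n θ W 1 ^ 2 * Real.sqrt JE :=
  stmt14_general n θ hθ W hW P ξ ξ' hmeas hmeas' hindep hindepE hindepE' hBer hBer' f HE hHE JE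
    hJEint hJE hbound
end
end
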